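/- arXiv:1903.02637 — 8 statements merged into one kernel-verified Lean document; each statement's English description precedes it below -/
import Mathlib

section
/- A single-input function f : ℕ → ℕ is obliviously-computable if and only if f is semilinear and nondecreasing. -/
/-- A chemical reaction network with species type `σ`, designated input species
`inputs i` for each of the `d` inputs, an output species, and a leader species. -/
structure CRN (d : ℕ) (σ : Type) [Fintype σ] [DecidableEq σ] where
  /-- Each reaction is a pair `(r, p)` of reactant counts and product counts. -/
  reactions : Finset ((σ → ℕ) × (σ → ℕ))
  inputs : Fin d → σ
  output : σ
  leader : σ
  inputs_inj : Function.Injective inputs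
  leader_not_input : ∀ i, inputs i ≠ leader

namespace CRN

variable {d : ℕ} {σ : Type} [Fintype σ] [DecidableEq σ]

/-- One reaction step: some reaction `(r, p)` with `r ≤ c` pointwise fires,
yielding `c - r + p`. -/
def Step (C : CRN d σ) (c c' : σ → ℕ) : Prop :=
  ∃ rp ∈ C.reactions, rp.1 ≤ c ∧ c' = c - rp.1 + rp.2

/-- Reachability by a finite sequence of reaction steps. -/
def Reachable (C : CRN d σ) : (σ → ℕ) → (σ → ℕ) → Prop :=
  Relation.ReflTransGen C.Step

/-- The initial configuration encoding input `x`: count `x i` of input species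
`inputs i`, count 1 of the leader, count 0 of everything else. -/
def init (C : CRN d σ) (x : Fin d → ℕ) : σ → ℕ :=
  fun s => (∑ i, if C.inputs i = s then x i else 0) + (if s = C.leader then 1 else 0)

/-- A configuration is stable if the output count never changes from it. -/
def Stable (C : CRN d σ) (c : σ → ℕ) : Prop :=
  ∀ c', C.Reachable c c' → c' C.output = c C.output

/-- `C` stably computes `f` if from every configuration reachable from an initial
configuration, a stable configuration with correct output count is reachable. -/
def StablyComputes (C : CRN d σ) (f : (Fin d → ℕ) → ℕ) : Prop :=
  ∀ x c, C.Reachable (C.init x) c →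
    ∃ o, C.Reachable c o ∧ C.Stable o ∧ o C.output = f x

/-- A CRN is output-oblivious if the output species is never a reactant. -/
def OutputOblivious (C : CRN d σ) : Prop :=
  ∀ rp ∈ C.reactions, rp.1 C.output = 0

/-- A CRN is output-monotonic if no reaction decreases the output species count. -/
def OutputMonotonic (C : CRN d σ) : Prop :=
  ∀ rp ∈ C.reactions, rp.1 C.output ≤ rp.2 C.output

end CRN

/-- `f` is obliviously-computable if some output-oblivious CRN stably computes it. -/
def ObliviouslyComputable {d : ℕ} (f : (Fin d → ℕ) → ℕ) : Prop :=
  ∃ (n : ℕ) (C : CRN d (Fin n)), C.OutputOblivious ∧ C.StablyComputes f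

/-- Semilinear subsets of `ℕ^d`: finite Boolean combinations of threshold sets
`{x : a·x ≥ b}` and mod sets `{x : a·x ≡ b (mod c)}`. -/
inductive SemilinearSet (d : ℕ) : Set (Fin d → ℕ) → Prop
  | threshold (a : Fin d → ℤ) (b : ℤ) :
      SemilinearSet d {x | b ≤ ∑ i, a i * (x i : ℤ)}
  | mod (a : Fin d → ℤ) (b : ℤ) (c : ℕ) (hc : 0 < c) :
      SemilinearSet d {x | (∑ i, a i * (x i : ℤ)) ≡ b [ZMOD (c : ℤ)]}
  | union {A B : Set (Fin d → ℕ)} :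
      SemilinearSet d A → SemilinearSet d B → SemilinearSet d (A ∪ B)
  | inter {A B : Set (Fin d → ℕ)} :
      SemilinearSet d A → SemilinearSet d B → SemilinearSet d (A ∩ B)
  | compl {A : Set (Fin d → ℕ)} :
      SemilinearSet d A → SemilinearSet d Aᶜ

/-- A function `f : ℕ^d → ℕ` is semilinear if it is a finite union of (rational)
affine partial functions whose domains are disjoint semilinear sets covering `ℕ^d`. -/
def SemilinearFn {d : ℕ} (f : (Fin d → ℕ) → ℕ) : Prop :=
  ∃ (m : ℕ) (dom : Fin m → Set (Fin d → ℕ))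
    (grad : Fin m → Fin d → ℚ) (b : Fin m → ℚ),
    (∀ k, SemilinearSet d (dom k)) ∧
    (∀ k l, k ≠ l → dom k ∩ dom l = ∅) ∧
    (∀ x, ∃ k, x ∈ dom k) ∧
    (∀ k, ∀ x ∈ dom k, (f x : ℚ) = (∑ i, grad k i * (x i : ℚ)) + b k)

/-! Both directions go through the eventually quilt-affine functions, `f (x + P) = f x + s`
for `x ≥ N`.

An output-oblivious CRN never consumes `Y`, so output counts only grow along reachability and `f`
is monotone. Unstable configurations form an upper set; its finitely many minimal elements give a
bound `b` such that adding species only where a stable configuration already exceeds `b` keeps it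
stable. Dickson's lemma then yields stable configurations `o x₁ ≤ o x₂` on the run of the inputs
that differ only above `b`, and the path between them is a loop that can be pumped: this gives
`f (x₁ + k Δ) = f x₁ + k s` exactly and `f y + s ≤ f (y + Δ)` for `y ≥ x₁`, and monotonicity
closes the gap on every residue class.

Conversely, an eventually quilt-affine function is affine on each class of the eventual residue
modulo `P`, hence semilinear, and when it is monotone a CRN simulating a finite-state transducer
computes it, reading the input tokens one at a time and emitting `f (x + 1) - f x` output tokens.
Finally the domains of a one-dimensional semilinear function are eventually periodic, so `f` is
affine along each progression `x + j P`, and monotonicity forces the slopes of neighbouring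
progressions to agree. -/

namespace CRN

variable {d : ℕ} {σ : Type} [Fintype σ] [DecidableEq σ] {C : CRN d σ}

theorem Step.add_right {c c' : σ → ℕ} (h : C.Step c c') (v : σ → ℕ) :
    C.Step (c + v) (c' + v) := by
  obtain ⟨rp, hmem, hle, rfl⟩ := h
  refine ⟨rp, hmem, hle.trans le_self_add, funext fun t => ?_⟩
  have : rp.1 t ≤ c t := hle t
  simp only [Pi.add_apply, Pi.sub_apply]
  omega

theorem Reachable.add_right {c c' : σ → ℕ} (h : C.Reachable c c') (v : σ → ℕ) :
    C.Reachable (c + v) (c' + v) :=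
  Relation.ReflTransGen.lift (· + v) (fun _ _ hs => Step.add_right hs v) _ _ h

theorem Reachable.pump {a v w : σ → ℕ} (h : C.Reachable (a + v) (a + w)) (k : ℕ) :
    C.Reachable (a + k • v) (a + k • w) := by
  induction k with
  | zero => simp only [zero_smul, add_zero]; exact Relation.ReflTransGen.refl
  | succ k ih =>
    have hv := h.add_right (k • v)
    have hw := ih.add_right w
    rw [add_right_comm a w] at hv
    rw [succ_nsmul, succ_nsmul, ← add_assoc, ← add_assoc, add_right_comm a (k • v) v]
    exact hv.trans hw

theorem isUpperSet_setOf_not_stable (C : CRN d σ) : IsUpperSet {c | ¬ C.Stable c} := by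
  intro a b hab ha
  simp only [Stable, Set.mem_ofPred_eq, not_forall] at ha ⊢
  obtain ⟨c', hr, hne⟩ := ha
  refine ⟨c' + (b - a), ?_, ?_⟩
  · simpa [add_tsub_cancel_of_le hab] using Reachable.add_right hr (b - a)
  · have : a C.output ≤ b C.output := hab C.output
    simp only [Pi.add_apply, Pi.sub_apply]
    omega

theorem OutputOblivious.output_le_of_step (hC : C.OutputOblivious) {c c' : σ → ℕ}
    (h : C.Step c c') : c C.output ≤ c' C.output := by
  obtain ⟨rp, hmem, -, rfl⟩ := h
  simp [hC rp hmem]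

theorem OutputOblivious.output_le (hC : C.OutputOblivious) {c c' : σ → ℕ}
    (h : C.Reachable c c') : c C.output ≤ c' C.output := by
  induction h with
  | refl => exact le_rfl
  | tail _ hs ih => exact ih.trans (hC.output_le_of_step hs)

theorem StablyComputes.output_eq {f : (Fin d → ℕ) → ℕ} (hC : C.StablyComputes f)
    {x : Fin d → ℕ} {o : σ → ℕ} (hr : C.Reachable (C.init x) o) (ho : C.Stable o) :
    o C.output = f x := by
  obtain ⟨o', hro', -, hout⟩ := hC x o hr
  exact (ho o' hro').symm.trans hout

theorem stablyComputes_of_run {f : (Fin d → ℕ) → ℕ} (run : (Fin d → ℕ) → ℕ → σ → ℕ)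
    (len : (Fin d → ℕ) → ℕ) (hinit : ∀ x, run x 0 = C.init x)
    (hstep : ∀ x i c, C.Step (run x i) c ↔ i < len x ∧ c = run x (i + 1))
    (hout : ∀ x, run x (len x) C.output = f x) : C.StablyComputes f := by
  intro x c hc
  have hon : ∃ i ≤ len x, c = run x i := by
    induction hc with
    | refl => exact ⟨0, Nat.zero_le _, (hinit x).symm⟩
    | tail _ hs ih =>
      obtain ⟨i, -, rfl⟩ := ih
      obtain ⟨hlt, rfl⟩ := (hstep x i _).1 hs
      exact ⟨i + 1, hlt, rfl⟩
  have hfwd : ∀ i j, i + j ≤ len x → C.Reachable (run x i) (run x (i + j)) := by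
    intro i j hij
    induction j with
    | zero => exact Relation.ReflTransGen.refl
    | succ j ih => exact (ih (by omega)).tail ((hstep x (i + j) _).2 ⟨by omega, rfl⟩)
  have hstable : C.Stable (run x (len x)) := by
    intro c hc
    suffices c = run x (len x) by rw [this]
    induction hc with
    | refl => rfl
    | tail _ hs ih => subst ih; exact absurd ((hstep x _ _).1 hs).1 (lt_irrefl _)
  obtain ⟨i, hi, rfl⟩ := hon
  exact ⟨_, Nat.add_sub_cancel' hi ▸ hfwd i (len x - i) (by omega), hstable, hout x⟩

end CRN

theorem IsUpperSet.exists_add_notMem {σ : Type*} [Finite σ] {U : Set (σ → ℕ)}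
    (hU : IsUpperSet U) :
    ∃ b : σ → ℕ, ∀ c ∉ U, ∀ v : σ → ℕ, (∀ t, v t ≠ 0 → b t ≤ c t) → c + v ∉ U := by
  obtain ⟨ub, hub⟩ := (WellQuasiOrderedLE.finite_of_isAntichain
    (setOfPred_minimal_antichain (· ∈ U))).bddAbove
  refine ⟨ub + 1, fun c hc v hv hcv => ?_⟩
  obtain ⟨m, hmle, hmin⟩ := exists_minimal_le_of_wellFoundedLT (· ∈ U) (c + v) hcv
  obtain ⟨t, ht⟩ : ∃ t, c t < m t := by
    by_contra! h
    exact hc (hU h hmin.1)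
  have hm : m t ≤ c t + v t := hmle t
  have hmub : m t ≤ ub t := hub hmin t
  have hbc : ub t + 1 ≤ c t := hv t (by omega)
  omega

theorem exists_lt_le_and_forall_ne_imp_le {σ : Type*} [Finite σ] (u : ℕ → σ → ℕ)
    (b : σ → ℕ) : ∃ i j, i < j ∧ u i ≤ u j ∧ ∀ t, u i t ≠ u j t → b t ≤ u i t := by
  obtain ⟨i, j, hij, hle⟩ :=
    wellQuasiOrdered_le fun k => (u k, fun t => b t - min (u k t) (b t))
  refine ⟨i, j, hij, hle.1, fun t hne => ?_⟩
  have h1 : u i t ≤ u j t := hle.1 t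
  have h2 : b t - min (u i t) (b t) ≤ b t - min (u j t) (b t) := hle.2 t
  omega

theorem Nat.exists_forall_ge_eq_of_monotone_of_le {u : ℕ → ℕ} (hu : Monotone u) {B : ℕ}
    (hB : ∀ k, u k ≤ B) : ∃ K, ∀ k, K ≤ k → u k = u K := by
  have hbdd : BddAbove (Set.range u) := ⟨B, Set.forall_mem_range.2 hB⟩
  obtain ⟨K, hK⟩ := Nat.sSup_mem (Set.range_nonempty u) hbdd
  exact ⟨K, fun k hk => le_antisymm (hK ▸ le_csSup hbdd ⟨k, rfl⟩) (hu hk)⟩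

theorem le_of_forall_add_nat_mul_le {K : Type*} [Field K] [LinearOrder K] [IsStrictOrderedRing K]
    [Archimedean K] {a b d e : K} (h : ∀ j : ℕ, a + j * d ≤ b + j * e) : d ≤ e := by
  by_contra! hed
  obtain ⟨j, hj⟩ := exists_nat_gt ((b - a) / (d - e))
  rw [div_lt_iff₀ (sub_pos.2 hed)] at hj
  linarith [h j]

/-- In one dimension, the eventually quilt-affine functions of the paper. -/
def EventuallyQuiltAffine (f : ℕ → ℕ) : Prop :=
  ∃ N P s : ℕ, 0 < P ∧ ∀ x, N ≤ x → f (x + P) = f x + s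

theorem apply_add_mul_eq_add_mul {f : ℕ → ℕ} {N P s : ℕ}
    (hf : ∀ x, N ≤ x → f (x + P) = f x + s) {x : ℕ} (hx : N ≤ x) (j : ℕ) :
    f (x + j * P) = f x + j * s := by
  induction j with
  | zero => simp
  | succ j ih => rw [add_one_mul, ← add_assoc, hf _ (by omega), ih, add_one_mul, add_assoc]

theorem eventuallyQuiltAffine_of_le_add {f : ℕ → ℕ} (hf : Monotone f) {M Δ s : ℕ} (hΔ : 0 < Δ)
    (hbase : ∀ k, f (M + k * Δ) = f M + k * s) (hstep : ∀ y, M ≤ y → f y + s ≤ f (y + Δ)) :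
    EventuallyQuiltAffine f := by
  have hlow : ∀ t k, k * s ≤ f (M + t + k * Δ) := fun t k =>
    calc k * s ≤ f M + k * s := Nat.le_add_left _ _
      _ = f (M + k * Δ) := (hbase k).symm
      _ ≤ f (M + t + k * Δ) := hf (by omega)
  have hhigh : ∀ t < Δ, ∀ k, f (M + t + k * Δ) ≤ f M + (k + 1) * s := fun t ht k =>
    calc f (M + t + k * Δ) ≤ f (M + (k + 1) * Δ) := hf (by rw [add_one_mul]; omega)
      _ = f M + (k + 1) * s := hbase _
  have hsucc : ∀ t k, f (M + t + k * Δ) + s ≤ f (M + t + (k + 1) * Δ) := fun t k => by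
    simpa only [add_one_mul, add_assoc] using hstep (M + t + k * Δ) (by omega)
  -- along each residue class `M + t + k Δ`, `f - k s` is nondecreasing and bounded, so the sum
  -- over the classes stabilises, and then so does every summand
  have hterm : ∀ t k, f (M + t + k * Δ) - k * s ≤ f (M + t + (k + 1) * Δ) - (k + 1) * s :=
    fun t k => by have := hsucc t k; have := hlow t k; have := add_one_mul k s; omega
  obtain ⟨K, hK⟩ := Nat.exists_forall_ge_eq_of_monotone_of_le
    (u := fun k => ∑ t ∈ Finset.range Δ, (f (M + t + k * Δ) - k * s))
    (monotone_nat_of_le_succ fun k => Finset.sum_le_sum fun t _ => hterm t k)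
    (B := ∑ t ∈ Finset.range Δ, (f M + s)) fun k => Finset.sum_le_sum fun t ht => by
      have := hhigh t (Finset.mem_range.1 ht) k; have := add_one_mul k s; omega
  have hconst : ∀ t < Δ, ∀ k, K ≤ k → f (M + t + (k + 1) * Δ) = f (M + t + k * Δ) + s := by
    intro t ht k hk
    have := (Finset.sum_eq_sum_iff_of_le fun t _ => hterm t k).1
      ((hK k hk).trans (hK (k + 1) (by omega)).symm) t (Finset.mem_range.2 ht)
    have := hlow t k
    have := hsucc t k
    have := add_one_mul k s
    omega
  refine ⟨M + K * Δ, Δ, s, hΔ, fun x hx => ?_⟩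
  obtain ⟨t, k, ht, hk, rfl⟩ : ∃ t k, t < Δ ∧ K ≤ k ∧ x = M + t + k * Δ :=
    ⟨(x - M) % Δ, (x - M) / Δ, Nat.mod_lt _ hΔ, (Nat.le_div_iff_mul_le hΔ).2 (by omega),
      by have := Nat.mod_add_div' (x - M) Δ; omega⟩
  rw [add_assoc _ (k * Δ), ← add_one_mul, hconst t ht k hk]

theorem eventuallyQuiltAffine_of_affine_along_period {f : ℕ → ℕ} (hf : Monotone f) {N P : ℕ}
    (hP : 0 < P) (h : ∀ x, N ≤ x → ∀ j : ℕ, (f (x + j * P) : ℚ) = f x + j * (f (x + P) - f x)) :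
    EventuallyQuiltAffine f := by
  set D : ℕ → ℚ := fun x => f (x + P) - f x
  -- `f (x + j P) ≤ f (x + 1 + j P) ≤ f (x + (j + 1) P)` for all `j` forces `D (x + 1) = D x`
  have hD : ∀ x, N ≤ x → D (x + 1) = D x := fun x hx => by
    refine le_antisymm (le_of_forall_add_nat_mul_le (a := (f (x + 1) : ℚ)) (b := f x + D x)
      fun j => ?_) (le_of_forall_add_nat_mul_le (a := (f x : ℚ)) (b := f (x + 1)) fun j => ?_)
    · have hmono : (f (x + 1 + j * P) : ℚ) ≤ f (x + (j + 1) * P) := by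
        exact_mod_cast hf (by rw [add_one_mul]; omega)
      have := h x hx (j + 1)
      rw [← h (x + 1) (by omega)]
      push_cast at this
      linarith
    · rw [← h x hx, ← h (x + 1) (by omega)]
      exact_mod_cast hf (by omega)
  have hDN : ∀ x, N ≤ x → D x = D N := fun x hx => by
    induction x, hx using Nat.le_induction with
    | base => rfl
    | succ x hx ih => rw [hD x hx, ih]
  refine ⟨N, P, f (N + P) - f N, hP, fun x hx => ?_⟩
  have hfN : f N ≤ f (N + P) := hf (by omega)
  have := hDN x hx
  simp only [D] at this
  rw [← Nat.cast_inj (R := ℚ)]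
  push_cast [hfN]
  linarith

namespace CRN

variable {σ : Type} [Fintype σ] [DecidableEq σ] {C : CRN 1 σ}

theorem init_add_single (C : CRN 1 σ) (x k : ℕ) :
    C.init (fun _ => x + k) = C.init (fun _ => x) + Pi.single (C.inputs 0) k := by
  funext s
  simp only [init, Fin.sum_univ_one, Pi.add_apply, Pi.single_apply, eq_comm (a := s)]
  split_ifs <;> omega

theorem StablyComputes.exists_stable_run {g : (Fin 1 → ℕ) → ℕ} (hC : C.StablyComputes g) :
    ∃ o : ℕ → σ → ℕ, (∀ x, C.Reachable (C.init fun _ => x) (o x) ∧ C.Stable (o x)) ∧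
      ∀ x t, C.Reachable (o x + Pi.single (C.inputs 0) t) (o (x + t)) := by
  have settle : ∀ x c, C.Reachable (C.init fun _ => x) c → ∃ o, C.Reachable c o ∧ C.Stable o :=
    fun x c h => (hC _ c h).imp fun _ ho => ⟨ho.1, ho.2.1⟩
  choose! S hS using settle
  let o : ℕ → σ → ℕ := fun x => Nat.rec (S 0 (C.init fun _ => 0))
    (fun x c => S (x + 1) (c + Pi.single (C.inputs 0) 1)) x
  have ho : ∀ x, C.Reachable (C.init fun _ => x) (o x) ∧ C.Stable (o x) := by
    intro x
    induction x with
    | zero => exact hS 0 _ Relation.ReflTransGen.refl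
    | succ x ih =>
      have hr : C.Reachable (C.init fun _ => x + 1) (o x + Pi.single (C.inputs 0) 1) := by
        rw [C.init_add_single]; exact ih.1.add_right _
      exact ⟨hr.trans (hS _ _ hr).1, (hS _ _ hr).2⟩
  refine ⟨o, ho, fun x t => ?_⟩
  induction t with
  | zero => simp only [Pi.single_zero, add_zero]; exact Relation.ReflTransGen.refl
  | succ t ih =>
    have hr : C.Reachable (C.init fun _ => x + t + 1) (o (x + t) + Pi.single (C.inputs 0) 1) := by
      rw [C.init_add_single]; exact (ho (x + t)).1.add_right _
    rw [Pi.single_add, ← add_assoc]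
    exact (ih.add_right _).trans (hS _ _ hr).1

theorem OutputOblivious.monotone {f : ℕ → ℕ} (hOb : C.OutputOblivious)
    (hC : C.StablyComputes fun x => f (x 0)) : Monotone f := by
  refine monotone_nat_of_le_succ fun x => ?_
  obtain ⟨o, hro, hso, hout⟩ := hC _ _ Relation.ReflTransGen.refl
  have hr : C.Reachable (C.init fun _ => x + 1) (o + Pi.single (C.inputs 0) 1) := by
    rw [C.init_add_single]; exact hro.add_right _
  obtain ⟨o', hro', -, hout'⟩ := hC _ _ hr
  have := hOb.output_le hro'
  simp only [Pi.add_apply] at this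
  simp only at hout hout'
  omega

theorem OutputOblivious.eventuallyQuiltAffine {f : ℕ → ℕ} (hOb : C.OutputOblivious)
    (hC : C.StablyComputes fun x => f (x 0)) : EventuallyQuiltAffine f := by
  obtain ⟨o, ho, hrun⟩ := hC.exists_stable_run
  obtain ⟨b, hb⟩ := C.isUpperSet_setOf_not_stable.exists_add_notMem
  obtain ⟨x₁, x₂, hlt, hle, hsat⟩ := exists_lt_le_and_forall_ne_imp_le o b
  set X : ℕ → σ → ℕ := Pi.single (M := fun _ => ℕ) (C.inputs 0)
  set w := o x₂ - o x₁
  have hloop : C.Reachable (o x₁ + X (x₂ - x₁)) (o x₁ + w) := by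
    have := hrun x₁ (x₂ - x₁)
    rwa [Nat.add_sub_cancel' hlt.le, ← add_tsub_cancel_of_le hle] at this
  -- the loop `o x₁ + X (x₂ - x₁) →* o x₁ + w` can be pumped behind any later input
  have hpump : ∀ y k, x₁ ≤ y →
      C.Reachable (C.init fun _ => y + k * (x₂ - x₁)) (o y + k • w) := by
    intro y k hy
    have hinit : C.init (fun _ => y + k * (x₂ - x₁)) =
        C.init (fun _ => x₁) + k • X (x₂ - x₁) + X (y - x₁) := by
      rw [show y + k * (x₂ - x₁) = x₁ + (k * (x₂ - x₁) + (y - x₁)) by omega, C.init_add_single,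
        Pi.single_add, ← smul_eq_mul, Pi.single_smul', add_assoc]
    have h₁ := ((ho x₁).1.add_right (k • X (x₂ - x₁))).add_right (X (y - x₁))
    have h₂ := (hloop.pump k).add_right (X (y - x₁))
    have h₃ := (hrun x₁ (y - x₁)).add_right (k • w)
    rw [add_right_comm, Nat.add_sub_cancel' hy] at h₃
    rw [hinit]
    exact h₁.trans (h₂.trans h₃)
  have hstable : ∀ k : ℕ, C.Stable (o x₁ + k • w) := fun k => by
    simpa using hb _ (by simpa using (ho x₁).2) (k • w) fun t ht => hsat t fun h => by
      simp [w, h] at ht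
  have hfo : ∀ y, o y C.output = f y := fun y => hC.output_eq (ho y).1 (ho y).2
  have hout : ∀ y k, (o y + k • w) C.output = f y + k * w C.output := fun y k => by
    simp [hfo]
  refine eventuallyQuiltAffine_of_le_add (hOb.monotone hC) (Nat.sub_pos_of_lt hlt) (M := x₁)
    (s := w C.output) (fun k => ?_) (fun y hy => ?_)
  · rw [← hout]; exact (hC.output_eq (hpump x₁ k le_rfl) (hstable k)).symm
  · obtain ⟨o', hro', -, hout'⟩ := hC _ _ (hpump y 1 hy)
    simpa [hfo, hout'] using hOb.output_le hro'

end CRN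

def eventualResidue (N P x : ℕ) : ℕ := if x < N then x else N + (x - N) % P

section EventualResidue

variable {N P : ℕ}

theorem eventualResidue_lt (hP : 0 < P) (x : ℕ) : eventualResidue N P x < N + P := by
  unfold eventualResidue
  split_ifs
  · omega
  · have := Nat.mod_lt (x - N) hP; omega

theorem eventualResidue_add_div_mul {x : ℕ} (hx : N ≤ x) :
    eventualResidue N P x + (x - N) / P * P = x := by
  have := Nat.mod_add_div' (x - N) P
  simp only [eventualResidue, if_neg (not_lt.2 hx)]
  omega

theorem eventualResidue_eventualResidue_add_one (x : ℕ) :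
    eventualResidue N P (eventualResidue N P x + 1) = eventualResidue N P (x + 1) := by
  unfold eventualResidue
  split_ifs <;> first | omega | congr 1
  rw [show N + (x - N) % P + 1 - N = (x - N) % P + 1 by omega, Nat.mod_add_mod,
    show x + 1 - N = x - N + 1 by omega]

theorem eventualResidue_eq_iff_of_lt {x k : ℕ} (hk : k < N) :
    eventualResidue N P x = k ↔ x = k := by
  unfold eventualResidue
  split_ifs <;> omega

theorem eventualResidue_modEq (x : ℕ) : eventualResidue N P x ≡ x [MOD P] := by
  by_cases hx : x < N
  · simp only [eventualResidue, if_pos hx]; rfl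
  · have h := eventualResidue_add_div_mul (P := P) (not_lt.1 hx)
    exact (Nat.modEq_iff_dvd' (by omega)).2 (Dvd.intro_left ((x - N) / P) (by omega))

theorem eventualResidue_eq_iff_of_le (hP : 0 < P) {x k : ℕ} (hNk : N ≤ k) (hk : k < N + P) :
    eventualResidue N P x = k ↔ N ≤ x ∧ x ≡ k [MOD P] := by
  have hlt := eventualResidue_lt (N := N) hP x
  constructor
  · rintro rfl
    refine ⟨?_, (eventualResidue_modEq x).symm⟩
    by_contra hx
    simp only [eventualResidue, if_pos (not_le.1 hx)] at hNk
    omega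
  · rintro ⟨hx, hxk⟩
    have hle : N ≤ eventualResidue N P x := by simp [eventualResidue, not_lt.2 hx]
    exact ((eventualResidue_modEq x).trans hxk).eq_of_abs_lt (abs_sub_lt_iff.2 ⟨by omega, by omega⟩)

end EventualResidue

theorem cast_sub_mul_eventualResidue {f : ℕ → ℕ} {N P s : ℕ} (hP : 0 < P)
    (hf : ∀ x, N ≤ x → f (x + P) = f x + s) (x : ℕ) :
    (f x : ℚ) - x * (s / P) =
      f (eventualResidue N P x) - eventualResidue N P x * (s / P) := by
  by_cases hx : x < N
  · simp [eventualResidue, hx]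
  · have hr := eventualResidue_add_div_mul (P := P) (not_lt.1 hx)
    have hle : N ≤ eventualResidue N P x := by simp [eventualResidue, hx]
    have hfx := apply_add_mul_eq_add_mul hf hle ((x - N) / P)
    rw [hr] at hfx
    have hxq : (x : ℚ) = eventualResidue N P x + ((x - N) / P : ℕ) * P := by exact_mod_cast hr.symm
    rw [hfx, hxq]
    push_cast
    field_simp
    ring

namespace SemilinearSet

theorem setOf_le (n : ℕ) : SemilinearSet 1 {x | n ≤ x 0} := by
  convert threshold (fun _ => 1) n using 1
  ext x
  simp

theorem setOf_eq (n : ℕ) : SemilinearSet 1 {x | x 0 = n} := by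
  convert (setOf_le n).inter (setOf_le (n + 1)).compl using 1
  ext x
  simp only [Set.mem_ofPred_eq, Set.mem_inter_iff, Set.mem_compl_iff]
  omega

theorem setOf_modEq (k : ℕ) {P : ℕ} (hP : 0 < P) : SemilinearSet 1 {x | x 0 ≡ k [MOD P]} := by
  convert mod (fun _ => 1) k P hP using 1
  ext x
  simp [Int.natCast_modEq_iff]

theorem setOf_eventualResidue_eq {N P : ℕ} (hP : 0 < P) {k : ℕ} (hk : k < N + P) :
    SemilinearSet 1 {x | eventualResidue N P (x 0) = k} := by
  by_cases hkN : k < N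
  · simpa only [eventualResidue_eq_iff_of_lt hkN] using setOf_eq k
  · simpa only [eventualResidue_eq_iff_of_le hP (not_lt.1 hkN) hk, Set.ofPred_and] using
      (setOf_le N).inter (setOf_modEq k hP)

end SemilinearSet

theorem EventuallyQuiltAffine.semilinearFn {f : ℕ → ℕ} (hf : EventuallyQuiltAffine f) :
    SemilinearFn fun x : Fin 1 → ℕ => f (x 0) := by
  obtain ⟨N, P, s, hP, hf⟩ := hf
  refine ⟨N + P, fun k => {x | eventualResidue N P (x 0) = k}, fun _ _ => s / P,
    fun k => f k - k * (s / P), fun k => SemilinearSet.setOf_eventualResidue_eq hP k.2,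
    fun k l hkl => ?_, fun x => ⟨⟨_, eventualResidue_lt hP (x 0)⟩, rfl⟩, fun k x hx => ?_⟩
  · ext x
    simp only [Set.mem_inter_iff, Set.mem_ofPred_eq, Set.mem_empty_iff_false, iff_false]
    rintro ⟨hk, hl⟩
    exact hkl (Fin.ext (hk.symm.trans hl))
  · simp only [Set.mem_ofPred_eq] at hx
    have := cast_sub_mul_eventualResidue hP hf (x 0)
    rw [hx] at this
    simp only [Fin.sum_univ_one]
    linarith

def PeriodicFrom (N P : ℕ) (p : ℕ → Prop) : Prop :=
  ∀ x, N ≤ x → (p (x + P) ↔ p x)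

namespace PeriodicFrom

variable {N P : ℕ} {p : ℕ → Prop}

theorem add_mul (h : PeriodicFrom N P p) {x : ℕ} (hx : N ≤ x) (j : ℕ) : p (x + j * P) ↔ p x := by
  induction j with
  | zero => simp
  | succ j ih => rw [add_one_mul, ← add_assoc, h _ (by omega), ih]

theorem mono (h : PeriodicFrom N P p) {N' P' : ℕ} (hN : N ≤ N') (hP : P ∣ P') :
    PeriodicFrom N' P' p := by
  obtain ⟨j, rfl⟩ := hP
  intro x hx
  rw [mul_comm]
  exact h.add_mul (hN.trans hx) j

end PeriodicFrom

theorem SemilinearSet.exists_periodicFrom {A : Set (Fin 1 → ℕ)} (hA : SemilinearSet 1 A) :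
    ∃ N P, 0 < P ∧ PeriodicFrom N P fun x => (fun _ => x) ∈ A := by
  induction hA with
  | threshold a b =>
    refine ⟨b.natAbs + 1, 1, one_pos, fun x hx => ?_⟩
    have hx' : (b.natAbs : ℤ) + 1 ≤ x := by exact_mod_cast hx
    rw [Int.natCast_natAbs] at hx'
    have := le_abs_self b
    have := neg_abs_le b
    simp only [Set.mem_ofPred_eq, Fin.sum_univ_one]
    push_cast
    rcases lt_trichotomy (a 0) 0 with ha | ha | ha
    · constructor <;> intro h <;> nlinarith
    · simp [ha]
    · constructor <;> intro h <;> nlinarith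
  | mod a b c hc =>
    refine ⟨0, c, hc, fun x _ => ?_⟩
    simp only [Set.mem_ofPred_eq, Fin.sum_univ_one, Int.ModEq]
    push_cast
    rw [mul_add, Int.add_mul_emod_self_right]
  | union _ _ ihA ihB =>
    obtain ⟨N₁, P₁, hP₁, h₁⟩ := ihA
    obtain ⟨N₂, P₂, hP₂, h₂⟩ := ihB
    refine ⟨max N₁ N₂, P₁ * P₂, Nat.mul_pos hP₁ hP₂, fun x hx => or_congr ?_ ?_⟩
    · exact h₁.mono (le_max_left _ _) (dvd_mul_right _ _) x hx
    · exact h₂.mono (le_max_right _ _) (dvd_mul_left _ _) x hx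
  | inter _ _ ihA ihB =>
    obtain ⟨N₁, P₁, hP₁, h₁⟩ := ihA
    obtain ⟨N₂, P₂, hP₂, h₂⟩ := ihB
    refine ⟨max N₁ N₂, P₁ * P₂, Nat.mul_pos hP₁ hP₂, fun x hx => and_congr ?_ ?_⟩
    · exact h₁.mono (le_max_left _ _) (dvd_mul_right _ _) x hx
    · exact h₂.mono (le_max_right _ _) (dvd_mul_left _ _) x hx
  | compl _ ih =>
    obtain ⟨N, P, hP, h⟩ := ih
    exact ⟨N, P, hP, fun x hx => not_congr (h x hx)⟩

theorem SemilinearFn.exists_affine_along_period {f : ℕ → ℕ}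
    (hf : SemilinearFn fun x : Fin 1 → ℕ => f (x 0)) :
    ∃ N P, 0 < P ∧ ∀ x, N ≤ x → ∀ j : ℕ,
      (f (x + j * P) : ℚ) = f x + j * (f (x + P) - f x) := by
  obtain ⟨m, dom, grad, b, hdom, -, hcover, haff⟩ := hf
  choose N P hP hper using fun k => (hdom k).exists_periodicFrom
  refine ⟨Finset.univ.sup N, ∏ k, P k, Finset.prod_pos fun k _ => hP k, fun x hx j => ?_⟩
  obtain ⟨k, hk⟩ := hcover fun _ => x
  have hper' := (hper k).mono (Finset.le_sup (Finset.mem_univ k))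
    (Finset.dvd_prod_of_mem P (Finset.mem_univ k))
  have hval : ∀ y, (fun _ => y) ∈ dom k → (f y : ℚ) = grad k 0 * y + b k := fun y hy => by
    simpa using haff k _ hy
  rw [hval _ ((hper'.add_mul hx j).2 hk), hval _ ((hper' x hx).2 hk), hval x hk]
  push_cast
  ring

theorem SemilinearFn.eventuallyQuiltAffine {f : ℕ → ℕ}
    (hf : SemilinearFn fun x : Fin 1 → ℕ => f (x 0)) (hmono : Monotone f) :
    EventuallyQuiltAffine f :=
  let ⟨_, _, hP, h⟩ := hf.exists_affine_along_period
  eventuallyQuiltAffine_of_affine_along_period hmono hP h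

namespace Transducer

variable (n : ℕ) (next emit : ℕ → ℕ) (f : ℕ → ℕ)

def tokens (i k : ℕ) : Fin (n + 3) → ℕ := fun t => if (t : ℕ) = i then k else 0

/-- Species `0`, `1`, `2` are the input `X`, the leader `L` and the output `Y`, species `3 + i`
is the state `Aᵢ`; the reactions are `L → A₀ + (f 0) Y` and `Aᵢ + X → A_{next i} + (emit i) Y`. -/
def crn : CRN 1 (Fin (n + 3)) where
  reactions := insert (tokens n 1 1, tokens n 3 1 + tokens n 2 (f 0)) ((Finset.range n).image
    fun i => (tokens n (3 + i) 1 + tokens n 0 1, tokens n (3 + next i) 1 + tokens n 2 (emit i)))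
  inputs _ := ⟨0, by omega⟩
  output := ⟨2, by omega⟩
  leader := ⟨1, by omega⟩
  inputs_inj _ _ _ := Subsingleton.elim _ _
  leader_not_input _ := by simp

theorem step_iff {c c' : Fin (n + 3) → ℕ} : (crn n next emit f).Step c c' ↔
    (tokens n 1 1 ≤ c ∧ c' = c - tokens n 1 1 + (tokens n 3 1 + tokens n 2 (f 0))) ∨
    ∃ i < n, tokens n (3 + i) 1 + tokens n 0 1 ≤ c ∧ c' = c - (tokens n (3 + i) 1 + tokens n 0 1) +
      (tokens n (3 + next i) 1 + tokens n 2 (emit i)) := by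
  simp [CRN.Step, crn]

def config (x k : ℕ) : Fin (n + 3) → ℕ :=
  tokens n 0 (x - k) + tokens n (3 + next^[k] 0) 1 + tokens n 2 (f k)

variable {n next emit f}

theorem iterate_lt (hn : 0 < n) (hnext : ∀ i < n, next i < n) (k : ℕ) : next^[k] 0 < n := by
  induction k with
  | zero => exact hn
  | succ k ih => rw [Function.iterate_succ_apply']; exact hnext _ ih

theorem step_init_iff (x : Fin 1 → ℕ) {c : Fin (n + 3) → ℕ} :
    (crn n next emit f).Step ((crn n next emit f).init x) c ↔ c = config n next f (x 0) 0 := by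
  have hinit : (crn n next emit f).init x = tokens n 0 (x 0) + tokens n 1 1 := by
    funext t
    simp only [CRN.init, crn, tokens, Fin.sum_univ_one, Pi.add_apply, Fin.ext_iff]
    split_ifs <;> omega
  rw [step_iff, hinit]
  constructor
  · rintro (⟨-, rfl⟩ | ⟨i, hi, hle, -⟩)
    · funext t
      simp only [tokens, config, Pi.add_apply, Pi.sub_apply, Function.iterate_zero_apply]
      split_ifs <;> omega
    · have := hle ⟨3 + i, by omega⟩
      simp only [tokens, Pi.add_apply] at this
      split_ifs at this <;> omega
  · rintro rfl
    refine Or.inl ⟨fun t => ?_, funext fun t => ?_⟩ <;>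
      simp only [tokens, config, Pi.add_apply, Pi.sub_apply, Function.iterate_zero_apply] <;>
      split_ifs <;> omega

theorem config_succ (hf : ∀ k, f (k + 1) = f k + emit (next^[k] 0)) {x k : ℕ} (hk : k < x) :
    config n next f x k - (tokens n (3 + next^[k] 0) 1 + tokens n 0 1) +
      (tokens n (3 + next (next^[k] 0)) 1 + tokens n 2 (emit (next^[k] 0))) =
      config n next f x (k + 1) := by
  funext t
  simp only [tokens, config, Pi.add_apply, Pi.sub_apply, Function.iterate_succ_apply', hf]
  split_ifs <;> omega

theorem step_config_iff (hn : 0 < n) (hnext : ∀ i < n, next i < n)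
    (hf : ∀ k, f (k + 1) = f k + emit (next^[k] 0)) (x k : ℕ) {c : Fin (n + 3) → ℕ} :
    (crn n next emit f).Step (config n next f x k) c ↔ k < x ∧ c = config n next f x (k + 1) := by
  rw [step_iff]
  constructor
  · rintro (⟨hle, -⟩ | ⟨i, hi, hle, rfl⟩)
    · have := hle ⟨1, by omega⟩
      simp only [tokens, config, Pi.add_apply] at this
      grind
    · have h₁ := hle ⟨3 + i, by omega⟩
      have h₀ := hle ⟨0, by omega⟩
      simp only [tokens, config, Pi.add_apply] at h₁ h₀
      obtain rfl : i = next^[k] 0 := by grind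
      have hk : k < x := by grind
      exact ⟨hk, config_succ hf hk⟩
  · rintro ⟨hk, rfl⟩
    refine Or.inr ⟨_, iterate_lt hn hnext k, fun t => ?_, (config_succ hf hk).symm⟩
    simp only [tokens, config, Pi.add_apply]
    split_ifs <;> omega

theorem outputOblivious : (crn n next emit f).OutputOblivious := by
  intro rp hrp
  simp only [crn, Finset.mem_insert, Finset.mem_image, Finset.mem_range] at hrp
  rcases hrp with rfl | ⟨i, -, rfl⟩
  · simp [tokens, crn]
  · simp only [crn, tokens, Pi.add_apply]; grind

theorem stablyComputes (hn : 0 < n) (hnext : ∀ i < n, next i < n)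
    (hf : ∀ k, f (k + 1) = f k + emit (next^[k] 0)) :
    (crn n next emit f).StablyComputes fun x => f (x 0) := by
  refine CRN.stablyComputes_of_run
    (fun x i => Nat.casesOn i ((crn n next emit f).init x) (config n next f (x 0)))
    (fun x => x 0 + 1) (fun _ => rfl) (fun x i c => ?_) (fun x => ?_)
  · cases i with
    | zero => simpa using step_init_iff x
    | succ k => simpa using step_config_iff hn hnext hf (x 0) k
  · simp only [crn, config, tokens, Pi.add_apply]; grind

end Transducer

theorem EventuallyQuiltAffine.obliviouslyComputable {f : ℕ → ℕ} (hf : EventuallyQuiltAffine f)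
    (hmono : Monotone f) : ObliviouslyComputable fun x : Fin 1 → ℕ => f (x 0) := by
  obtain ⟨N, P, s, hP, hf⟩ := hf
  have hstate : ∀ k, (fun i => eventualResidue N P (i + 1))^[k] 0 = eventualResidue N P k := by
    intro k
    induction k with
    | zero =>
      simp only [Function.iterate_zero_apply, eventualResidue, zero_tsub, Nat.zero_mod]
      split_ifs <;> omega
    | succ k ih =>
      rw [Function.iterate_succ_apply', ih, eventualResidue_eventualResidue_add_one]
  have hemit : ∀ k, f (k + 1) =
      f k + (f (eventualResidue N P k + 1) - f (eventualResidue N P k)) := fun k => by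
    have h₁ := cast_sub_mul_eventualResidue hP hf (k + 1)
    have h₂ := cast_sub_mul_eventualResidue hP hf (eventualResidue N P k + 1)
    have h₃ := cast_sub_mul_eventualResidue hP hf k
    rw [eventualResidue_eventualResidue_add_one] at h₂
    have := hmono (Nat.le_succ (eventualResidue N P k))
    rw [← Nat.cast_inj (R := ℚ)]
    push_cast [this] at h₁ h₂ h₃ ⊢
    linarith
  exact ⟨_, Transducer.crn (N + P) (fun i => eventualResidue N P (i + 1))
    (fun i => f (i + 1) - f i) f, Transducer.outputOblivious, Transducer.stablyComputes (by omega)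
      (fun i _ => eventualResidue_lt hP _) (by simpa only [hstate] using hemit)⟩

/-- A single-input function `f : ℕ → ℕ` is obliviously-computable iff it is
semilinear and nondecreasing. -/
theorem obliviouslyComputable_one_dim_iff (f : ℕ → ℕ) :
    ObliviouslyComputable (fun x : Fin 1 → ℕ => f (x 0)) ↔
      SemilinearFn (fun x : Fin 1 → ℕ => f (x 0)) ∧ Monotone f := by
  constructor
  · rintro ⟨n, C, hOb, hC⟩
    exact ⟨(hOb.eventuallyQuiltAffine hC).semilinearFn, hOb.monotone hC⟩
  · rintro ⟨hf, hmono⟩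
    exact (hf.eventuallyQuiltAffine hmono).obliviouslyComputable hmono
end

section
/- Every quilt-affine function g : ℕ^d → ℕ (i.e., a quilt-affine function whose outputs are all nonnegative) is obliviously-computable. -/
/-- A function `g : ℕ^d → ℤ` is quilt-affine if it is nondecreasing and is the sum
of a rational linear function with nonnegative gradient and a periodic offset. -/
def QuiltAffine {d : ℕ} (g : (Fin d → ℕ) → ℤ) : Prop :=
  Monotone g ∧
  ∃ p : ℕ, 0 < p ∧
    ∃ (grad : Fin d → ℚ) (B : (Fin d → ZMod p) → ℚ),
      (∀ i, 0 ≤ grad i) ∧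
      ∀ x : Fin d → ℕ,
        (g x : ℚ) = (∑ i, grad i * (x i : ℚ)) + B (fun i => (x i : ZMod p))

/-! The leader turns into a register molecule `M q` that consumes the input molecules one at a
time, moving to state `q + eᵢ` and releasing `g (w + eᵢ) - g w` outputs, where `w` is any
vector with residue `q` mod `p`. For a quilt-affine `g` this increment depends only on the
residue (it is `∇ᵢ + B (q + eᵢ) - B q`), so after consuming `v` exactly `g v` outputs have
been released; monotonicity makes the increments natural numbers, so the output is never a
reactant. -/

lemma Pi.induction_add_single {ι : Type*} [Finite ι] [DecidableEq ι] {P : (ι → ℕ) → Prop}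
    (zero : P 0) (add_single : ∀ u i, P u → P (u + Pi.single i 1)) (u : ι → ℕ) : P u := by
  suffices h : ∀ v, P v → P (v + u) by simpa using h 0 zero
  induction u using Pi.single_induction with
  | zero => simp
  | add f g hf hg => exact fun v hv => add_assoc v f g ▸ hg _ (hf v hv)
  | single i m =>
    induction m with
    | zero => simp
    | succ m ih =>
      intro v hv
      rw [Pi.single_add, ← add_assoc]
      exact add_single _ _ (ih v hv)

lemma natCast_add_single {ι R : Type*} [DecidableEq ι] [AddMonoidWithOne R]
    (v : ι → ℕ) (i : ι) :
    (fun j => (((v + Pi.single i 1 : ι → ℕ) j : ℕ) : R)) =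
      (fun j => (v j : R)) + Pi.single i 1 := by
  funext j
  by_cases h : j = i
  · subst h; simp
  · simp [h]

namespace CRN

section Map

variable {d : ℕ} {σ τ : Type} [Fintype σ] [DecidableEq σ] [Fintype τ] [DecidableEq τ]
  (e : σ ≃ τ) (C : CRN d σ)

def map : CRN d τ where
  reactions := C.reactions.image fun rp => (rp.1 ∘ e.symm, rp.2 ∘ e.symm)
  inputs := e ∘ C.inputs
  output := e C.output
  leader := e C.leader
  inputs_inj := e.injective.comp C.inputs_inj
  leader_not_input := fun i h => C.leader_not_input i (e.injective h)

lemma step_map_iff {c c' : τ → ℕ} : (C.map e).Step c c' ↔ C.Step (c ∘ e) (c' ∘ e) := by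
  constructor
  · rintro ⟨_, hmem, hle, rfl⟩
    obtain ⟨rp, hrp, rfl⟩ := Finset.mem_image.mp hmem
    refine ⟨rp, hrp, fun s => by simpa using hle (e s), ?_⟩
    funext s
    simp
  · rintro ⟨rp, hrp, hle, heq⟩
    refine ⟨_, Finset.mem_image_of_mem _ hrp, fun t => by simpa using hle (e.symm t), ?_⟩
    funext t
    simpa using congrFun heq (e.symm t)

lemma reachable_map_iff {c c' : τ → ℕ} :
    (C.map e).Reachable c c' ↔ C.Reachable (c ∘ e) (c' ∘ e) := by
  constructor
  · exact Relation.ReflTransGen.lift (· ∘ e) (fun _ _ => (C.step_map_iff e).mp) _ _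
  · intro h
    have := Relation.ReflTransGen.lift (· ∘ e.symm)
      (fun a b hab => (C.step_map_iff e).mpr (by simpa [Function.comp_assoc] using hab)) _ _ h
    simpa [Reachable, Function.onFun, Function.comp_assoc] using this

lemma init_map (x : Fin d → ℕ) : (C.map e).init x ∘ e = C.init x := by
  funext s
  simp [CRN.init, CRN.map]

lemma OutputOblivious.map {C : CRN d σ} (hC : C.OutputOblivious) :
    (C.map e).OutputOblivious := by
  intro _ hmem
  obtain ⟨rp, hrp, rfl⟩ := Finset.mem_image.mp hmem
  simpa [CRN.map] using hC rp hrp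

lemma StablyComputes.map {C : CRN d σ} {f : (Fin d → ℕ) → ℕ} (hC : C.StablyComputes f) :
    (C.map e).StablyComputes f := by
  intro x c hc
  rw [reachable_map_iff, init_map] at hc
  obtain ⟨o, hco, ho, hof⟩ := hC x _ hc
  refine ⟨o ∘ e.symm, ?_, fun c' hc' => ?_, by simpa [CRN.map] using hof⟩
  · simpa [reachable_map_iff, Function.comp_assoc] using hco
  · rw [reachable_map_iff, Function.comp_assoc, e.symm_comp_self, Function.comp_id] at hc'
    simpa [CRN.map] using ho _ hc'

end Map

end CRN

lemma ObliviouslyComputable.of_crn {d : ℕ} {σ : Type} [Fintype σ] [DecidableEq σ]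
    {f : (Fin d → ℕ) → ℕ} (C : CRN d σ) (hC : C.OutputOblivious)
    (hf : C.StablyComputes f) :
    ObliviouslyComputable f :=
  ⟨_, C.map (Fintype.equivFin σ), hC.map _, hf.map _⟩

inductive Species (d : ℕ) (Q : Type)
  | input (i : Fin d)
  | output
  | leader
  | state (q : Q)
  deriving DecidableEq, Fintype

section Automaton

variable {d : ℕ} {Q : Type} [DecidableEq Q]
  (next : Q → Fin d → Q) (inc : Q → Fin d → ℕ) (q₀ : Q) (k₀ : ℕ)

namespace automatonCRN

def startReaction : (Species d Q → ℕ) × (Species d Q → ℕ) :=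
  (Pi.single .leader 1, Pi.single (.state q₀) 1 + Pi.single .output k₀)

def readReaction (q : Q) (i : Fin d) : (Species d Q → ℕ) × (Species d Q → ℕ) :=
  (Pi.single (.state q) 1 + Pi.single (.input i) 1,
    Pi.single (.state (next q i)) 1 + Pi.single .output (inc q i))

def config (u : Fin d → ℕ) (q : Q) (y : ℕ) : Species d Q → ℕ
  | .input i => u i
  | .output => y
  | .leader => 0
  | .state q' => if q' = q then 1 else 0

lemma config_sub_readReaction_add (u : Fin d → ℕ) (q : Q) (y : ℕ) (i : Fin d) :
    config (u + Pi.single i 1) q y - (readReaction next inc q i).1 +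
      (readReaction next inc q i).2 = config u (next q i) (y + inc q i) := by
  funext s
  cases s with
  | input j => by_cases h : j = i <;> simp [config, readReaction, h]
  | state q' => by_cases h : q' = q <;> by_cases h' : q' = next q i <;>
      simp [config, readReaction, Pi.single_apply, h, h']
  | _ => simp [config, readReaction]

end automatonCRN

variable [Fintype Q]

def automatonCRN : CRN d (Species d Q) where
  reactions := insert (automatonCRN.startReaction q₀ k₀)
    (Finset.univ.image fun qi : Q × Fin d => automatonCRN.readReaction next inc qi.1 qi.2)
  inputs := .input
  output := .output
  leader := .leader
  inputs_inj _ _ := Species.input.inj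
  leader_not_input _ := by simp

namespace automatonCRN

lemma mem_reactions {rp : (Species d Q → ℕ) × (Species d Q → ℕ)} :
    rp ∈ (automatonCRN next inc q₀ k₀).reactions ↔
      rp = startReaction q₀ k₀ ∨ ∃ q i, rp = readReaction next inc q i := by
  simp [automatonCRN, eq_comm]

lemma init_eq (x : Fin d → ℕ) :
    (automatonCRN next inc q₀ k₀).init x = fun (s : Species d Q) => match s with
      | .input i => x i
      | .leader => 1
      | _ => 0 := by
  funext s
  cases s <;> simp [CRN.init, automatonCRN, Finset.sum_ite_eq']

lemma step_init_iff {x : Fin d → ℕ} {c : Species d Q → ℕ} :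
    (automatonCRN next inc q₀ k₀).Step ((automatonCRN next inc q₀ k₀).init x) c ↔
      c = config x q₀ k₀ := by
  rw [init_eq]
  constructor
  · rintro ⟨rp, hrp, hle, rfl⟩
    obtain rfl | ⟨q, i, rfl⟩ := (mem_reactions next inc q₀ k₀).mp hrp
    · funext s
      cases s <;> simp [startReaction, config, Pi.single_apply]
    · simpa [readReaction] using hle (.state q)
  · rintro rfl
    refine ⟨_, (mem_reactions next inc q₀ k₀).mpr (.inl rfl), fun s => ?_, ?_⟩
    · cases s <;> simp [startReaction]
    · funext s
      cases s <;> simp [startReaction, config, Pi.single_apply]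

lemma step_config_iff {u : Fin d → ℕ} {q : Q} {y : ℕ} {c : Species d Q → ℕ} :
    (automatonCRN next inc q₀ k₀).Step (config u q y) c ↔
      ∃ i u', u = u' + Pi.single i 1 ∧ c = config u' (next q i) (y + inc q i) := by
  constructor
  · rintro ⟨rp, hrp, hle, rfl⟩
    obtain rfl | ⟨q', i, rfl⟩ := (mem_reactions next inc q₀ k₀).mp hrp
    · simpa [startReaction, config] using hle .leader
    have hq : q' = q := by
      by_contra h
      simpa [readReaction, config, h] using hle (.state q')
    have hi : 1 ≤ u i := by simpa [readReaction, config] using hle (.input i)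
    have hu : u = (u - Pi.single i 1) + Pi.single i 1 :=
      (tsub_add_cancel_of_le fun j => by rw [Pi.single_apply]; split <;> simp_all).symm
    subst hq
    refine ⟨i, _, hu, ?_⟩
    rw [← config_sub_readReaction_add, ← hu]
  · rintro ⟨i, u', rfl, rfl⟩
    refine ⟨_, (mem_reactions next inc q₀ k₀).mpr (.inr ⟨q, i, rfl⟩), fun s => ?_,
      (config_sub_readReaction_add next inc u' q y i).symm⟩
    cases s with
    | input j => by_cases h : j = i <;> simp [config, readReaction, h]
    | state q' => by_cases h : q' = q <;> simp [config, readReaction, h]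
    | _ => simp [config, readReaction]

lemma outputOblivious : (automatonCRN next inc q₀ k₀).OutputOblivious := by
  intro rp hrp
  obtain rfl | ⟨q, i, rfl⟩ := (mem_reactions next inc q₀ k₀).mp hrp <;> rfl

lemma stable_config_zero (q : Q) (y : ℕ) :
    (automatonCRN next inc q₀ k₀).Stable (config 0 q y) := by
  intro c hc
  obtain rfl | ⟨c', hc', -⟩ := Relation.ReflTransGen.cases_head_iff.mp hc
  · rfl
  · obtain ⟨i, u', hu, -⟩ := (step_config_iff next inc q₀ k₀).mp hc'
    simpa using congrFun hu i

end automatonCRN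

end Automaton

section Computation

variable {d : ℕ} {Q : Type} [Fintype Q] [DecidableEq Q]
  {next : Q → Fin d → Q} {inc : Q → Fin d → ℕ} {π : (Fin d → ℕ) → Q}
  {g : (Fin d → ℕ) → ℕ}

namespace automatonCRN

lemma reachable_config_zero (hπ : ∀ v i, π (v + Pi.single i 1) = next (π v) i)
    (hg : ∀ v i, g (v + Pi.single i 1) = g v + inc (π v) i) (q₀ : Q) (k₀ : ℕ)
    (u v : Fin d → ℕ) :
    (automatonCRN next inc q₀ k₀).Reachable (config u (π v) (g v))
      (config 0 (π (u + v)) (g (u + v))) := by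
  induction u using Pi.induction_add_single generalizing v with
  | zero =>
    rw [zero_add]
    exact .refl
  | add_single u i ih =>
    have hstep : (automatonCRN next inc q₀ k₀).Step (config (u + Pi.single i 1) (π v) (g v))
        (config u (π (v + Pi.single i 1)) (g (v + Pi.single i 1))) := by
      rw [step_config_iff, hπ, hg]
      exact ⟨i, u, rfl, rfl⟩
    rw [add_right_comm, add_assoc]
    exact .head hstep (ih _)

lemma reachable_init_cases (hπ : ∀ v i, π (v + Pi.single i 1) = next (π v) i)
    (hg : ∀ v i, g (v + Pi.single i 1) = g v + inc (π v) i) {x : Fin d → ℕ}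
    {c : Species d Q → ℕ}
    (hc : (automatonCRN next inc (π 0) (g 0)).Reachable
      ((automatonCRN next inc (π 0) (g 0)).init x) c) :
    c = (automatonCRN next inc (π 0) (g 0)).init x ∨
      ∃ u v, u + v = x ∧ c = config u (π v) (g v) := by
  induction hc with
  | refl => exact .inl rfl
  | tail _ hstep ih =>
    obtain rfl | ⟨u, v, rfl, rfl⟩ := ih
    · exact .inr ⟨x, 0, add_zero x, (step_init_iff _ _ _ _).mp hstep⟩
    · obtain ⟨i, u', rfl, rfl⟩ := (step_config_iff _ _ _ _).mp hstep
      refine .inr ⟨u', v + Pi.single i 1, by abel, ?_⟩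
      rw [hπ, hg]

theorem stablyComputes (hπ : ∀ v i, π (v + Pi.single i 1) = next (π v) i)
    (hg : ∀ v i, g (v + Pi.single i 1) = g v + inc (π v) i) :
    (automatonCRN next inc (π 0) (g 0)).StablyComputes g := by
  intro x c hc
  have hfinal : (automatonCRN next inc (π 0) (g 0)).Reachable c (config 0 (π x) (g x)) := by
    obtain rfl | ⟨u, v, rfl, rfl⟩ := reachable_init_cases hπ hg hc
    · simpa using .head ((step_init_iff _ _ _ _).mpr rfl)
        (reachable_config_zero hπ hg (π 0) (g 0) x 0)
    · exact reachable_config_zero hπ hg _ _ u v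
  exact ⟨_, hfinal, stable_config_zero _ _ _ _ _ _, rfl⟩

end automatonCRN

end Computation

theorem obliviouslyComputable_of_automaton {d : ℕ} {Q : Type} [Fintype Q] [DecidableEq Q]
    {g : (Fin d → ℕ) → ℕ} (next : Q → Fin d → Q) (inc : Q → Fin d → ℕ)
    (π : (Fin d → ℕ) → Q) (hπ : ∀ v i, π (v + Pi.single i 1) = next (π v) i)
    (hg : ∀ v i, g (v + Pi.single i 1) = g v + inc (π v) i) :
    ObliviouslyComputable g :=
  .of_crn _ (automatonCRN.outputOblivious _ _ _ _) (automatonCRN.stablyComputes hπ hg)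

lemma QuiltAffine.exists_periodic_increments {d : ℕ} {G : (Fin d → ℕ) → ℤ}
    (hG : QuiltAffine G) :
    ∃ p, 0 < p ∧ ∀ (v w : Fin d → ℕ) (i : Fin d),
      (fun j => (v j : ZMod p)) = (fun j => (w j : ZMod p)) →
        G (v + Pi.single i 1) - G v = G (w + Pi.single i 1) - G w := by
  obtain ⟨-, p, hp, grad, B, -, hB⟩ := hG
  have increment (v : Fin d → ℕ) (i : Fin d) :
      ((G (v + Pi.single i 1) - G v : ℤ) : ℚ) =
        grad i + B ((fun j => (v j : ZMod p)) + Pi.single i 1) - B (fun j => (v j : ZMod p)) := by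
    rw [Int.cast_sub, hB, hB, natCast_add_single]
    simp only [Pi.add_apply, Pi.single_apply, Nat.cast_add, Nat.cast_ite, Nat.cast_one,
      CharP.cast_eq_zero, mul_add, mul_ite, mul_one, mul_zero, Finset.sum_add_distrib,
      Finset.sum_ite_eq', Finset.mem_univ, ↓reduceIte]
    ring
  refine ⟨p, hp, fun v w i hvw => ?_⟩
  exact_mod_cast (increment v i).trans (hvw ▸ (increment w i).symm)

/-- Every quilt-affine function with nonnegative outputs is obliviously-computable. -/
theorem quiltAffine_obliviouslyComputable {d : ℕ} (g : (Fin d → ℕ) → ℕ)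
    (hg : QuiltAffine fun x => (g x : ℤ)) :
    ObliviouslyComputable g := by
  obtain ⟨p, hp, hperiodic⟩ := hg.exists_periodic_increments
  have : NeZero p := ⟨hp.ne'⟩
  let residue (v : Fin d → ℕ) : Fin d → ZMod p := fun j => v j
  let lift (q : Fin d → ZMod p) : Fin d → ℕ := fun j => (q j).val
  have residue_lift (q : Fin d → ZMod p) : residue (lift q) = q := by
    funext j
    simp [residue, lift]
  refine obliviouslyComputable_of_automaton (fun q i => q + Pi.single i 1)
    (fun q i => g (lift q + Pi.single i 1) - g (lift q)) residue
    (fun v i => natCast_add_single v i) fun v i => ?_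
  have hinc := hperiodic v (lift (residue v)) i (residue_lift _).symm
  have hmono : g (lift (residue v)) ≤ g (lift (residue v) + Pi.single i 1) :=
    Int.ofNat_le.mp (hg.1 le_self_add)
  omega
end

section
/- Every function f : ℕ^d → ℕ that is stably computed by a leaderless output-oblivious CRN is superadditive: f(x) + f(y) ≤ f(x + y) for all x, y ∈ ℕ^d. -/
/-- A leaderless chemical reaction network: like a CRN but with no leader species. -/
structure LCRN (d : ℕ) (σ : Type) [Fintype σ] [DecidableEq σ] where
  reactions : Finset ((σ → ℕ) × (σ → ℕ))
  inputs : Fin d → σ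
  output : σ
  inputs_inj : Function.Injective inputs

namespace LCRN

variable {d : ℕ} {σ : Type} [Fintype σ] [DecidableEq σ]

def Step (C : LCRN d σ) (c c' : σ → ℕ) : Prop :=
  ∃ rp ∈ C.reactions, rp.1 ≤ c ∧ c' = c - rp.1 + rp.2

def Reachable (C : LCRN d σ) : (σ → ℕ) → (σ → ℕ) → Prop :=
  Relation.ReflTransGen C.Step

/-- The leaderless initial configuration encoding `x`: count `x i` of each input
species and count 0 of every other species. -/
def init (C : LCRN d σ) (x : Fin d → ℕ) : σ → ℕ :=
  fun s => ∑ i, if C.inputs i = s then x i else 0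

def Stable (C : LCRN d σ) (c : σ → ℕ) : Prop :=
  ∀ c', C.Reachable c c' → c' C.output = c C.output

def StablyComputes (C : LCRN d σ) (f : (Fin d → ℕ) → ℕ) : Prop :=
  ∀ x c, C.Reachable (C.init x) c →
    ∃ o, C.Reachable c o ∧ C.Stable o ∧ o C.output = f x

def OutputOblivious (C : LCRN d σ) : Prop :=
  ∀ rp ∈ C.reactions, rp.1 C.output = 0

end LCRN

section Aux

variable {d : ℕ} {σ : Type} [Fintype σ] [DecidableEq σ]

lemma step_add {C : LCRN d σ} {c c' : σ → ℕ} (e : σ → ℕ) (h : C.Step c c') :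
    C.Step (c + e) (c' + e) := by
  obtain ⟨rp, hrp, hle, heq⟩ := h
  refine ⟨rp, hrp, fun s => le_trans (hle s) (by simp), ?_⟩
  subst heq
  funext s
  have h : rp.1 s ≤ c s := hle s
  simp only [Pi.add_apply, Pi.sub_apply]
  omega

lemma reachable_add {C : LCRN d σ} {c c' : σ → ℕ} (e : σ → ℕ)
    (h : C.Reachable c c') : C.Reachable (c + e) (c' + e) := by
  induction h with
  | refl => exact Relation.ReflTransGen.refl
  | tail _ hstep ih => exact ih.tail (step_add e hstep)

lemma reachable_add' {C : LCRN d σ} {c c' : σ → ℕ} (e : σ → ℕ)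
    (h : C.Reachable c c') : C.Reachable (e + c) (e + c') := by
  rw [add_comm e c, add_comm e c']; exact reachable_add e h

lemma init_add (C : LCRN d σ) (x y : Fin d → ℕ) :
    C.init (x + y) = C.init x + C.init y := by
  funext s
  simp only [LCRN.init, Pi.add_apply, ← Finset.sum_add_distrib]
  refine Finset.sum_congr rfl fun i _ => ?_
  split <;> simp

lemma out_mono {C : LCRN d σ} (hob : C.OutputOblivious) {c c' : σ → ℕ}
    (h : C.Reachable c c') : c C.output ≤ c' C.output := by
  induction h with
  | refl => exact le_refl _
  | tail _ hstep ih =>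
      obtain ⟨rp, hrp, hle, heq⟩ := hstep
      have := hob rp hrp
      calc _ ≤ _ := ih
        _ ≤ _ := by simp [heq, Pi.add_apply, Pi.sub_apply, this]

end Aux

/-- Every function stably computed by a leaderless output-oblivious CRN is
superadditive. -/
theorem leaderless_outputOblivious_superadditive {d : ℕ} {σ : Type} [Fintype σ]
    [DecidableEq σ] (C : LCRN d σ) (f : (Fin d → ℕ) → ℕ)
    (hob : C.OutputOblivious) (hcomp : C.StablyComputes f) :
    ∀ x y : Fin d → ℕ, f x + f y ≤ f (x + y) := by
  intro x y
  obtain ⟨o1, h1, _, ho1⟩ := hcomp x _ Relation.ReflTransGen.refl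
  obtain ⟨o2, h2, _, ho2⟩ := hcomp y _ Relation.ReflTransGen.refl
  have hreach : C.Reachable (C.init (x + y)) (o1 + o2) := by
    rw [init_add]
    exact (reachable_add (C.init y) h1).trans (reachable_add' o1 h2)
  obtain ⟨o, ho, _, hout⟩ := hcomp (x + y) _ hreach
  have := out_mono hob ho
  simp only [Pi.add_apply] at this
  omega
end

section
/- If f : ℕ^d → ℕ is obliviously-computable, then every fixed-input restriction f_{[x(i)→j]} : ℕ^d → ℕ (for i ∈ {1,…,d} and j ∈ ℕ) is obliviously-computable. -/
namespace CRNRestrict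

variable {d n : ℕ}

/-- Embedding of old species into the enlarged species set. -/
def em (t : Fin n) : Fin (n + 2) := ⟨t.val, by omega⟩

/-- The new (inert) input species. -/
def Xn (n : ℕ) : Fin (n + 2) := ⟨n, by omega⟩

/-- The new leader species. -/
def Ln (n : ℕ) : Fin (n + 2) := ⟨n + 1, by omega⟩

lemma em_ne_Xn (t : Fin n) : em t ≠ Xn n := by
  intro h; have := congrArg Fin.val h; simp [em, Xn] at this; omega

lemma em_ne_Ln (t : Fin n) : em t ≠ Ln n := by
  intro h; have := congrArg Fin.val h; simp [em, Ln] at this; omega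

lemma Xn_ne_Ln : Xn n ≠ Ln n := by
  intro h; have := congrArg Fin.val h; simp [Xn, Ln] at this

lemma em_inj : Function.Injective (em (n := n)) := by
  intro a b h
  have h2 := congrArg Fin.val h
  simp only [em] at h2
  exact Fin.ext h2

/-- Extend a configuration by zero on the two new species. -/
def E (c : Fin n → ℕ) : Fin (n + 2) → ℕ :=
  fun s => if h : s.val < n then c ⟨s.val, h⟩ else 0

lemma E_em (c : Fin n → ℕ) (t : Fin n) : E c (em t) = c t := by
  simp [E, em, t.isLt]

lemma E_Xn (c : Fin n → ℕ) : E c (Xn n) = 0 := by simp [E, Xn]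
lemma E_Ln (c : Fin n → ℕ) : E c (Ln n) = 0 := by simp [E, Ln]

lemma E_add (a b : Fin n → ℕ) : E (a + b) = E a + E b := by
  funext s; by_cases h : s.val < n <;> simp [E, h]

/-- Garbage: `m` copies of the new (inert) input species. -/
def G (n m : ℕ) : Fin (n + 2) → ℕ := fun s => if s = Xn n then m else 0

/-- One copy of the new leader. -/
def D (n : ℕ) : Fin (n + 2) → ℕ := fun s => if s = Ln n then 1 else 0

lemma G_em (m : ℕ) (t : Fin n) : G n m (em t) = 0 := by simp [G, em_ne_Xn]
lemma D_em (t : Fin n) : D n (em t) = 0 := by simp [D, em_ne_Ln]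
lemma G_Xn (m : ℕ) : G n m (Xn n) = m := if_pos rfl
lemma D_Ln : D n (Ln n) = 1 := if_pos rfl
lemma G_Ln (m : ℕ) : G n m (Ln n) = 0 := if_neg (fun h => Xn_ne_Ln h.symm)
lemma D_Xn : D n (Xn n) = 0 := if_neg Xn_ne_Ln

/-- What the special leader reaction injects (old-species view). -/
def J (C : CRN d (Fin n)) (i : Fin d) (j : ℕ) : Fin n → ℕ :=
  fun t => (if t = C.inputs i then j else 0) + (if t = C.leader then 1 else 0)

/-- The enlarged CRN. -/
def lift (C : CRN d (Fin n)) (i : Fin d) (j : ℕ) : CRN d (Fin (n + 2)) where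
  reactions := (C.reactions.image fun rp => (E rp.1, E rp.2)) ∪ {(D n, E (J C i j))}
  inputs := fun k => if k = i then Xn n else em (C.inputs k)
  output := em C.output
  leader := Ln n
  inputs_inj := by
    intro a b hab
    by_cases ha : a = i <;> by_cases hb : b = i <;>
      simp only [ha, hb, ite_true, ite_false, if_pos, if_neg] at hab
    · rw [ha, hb]
    · exact absurd hab.symm (em_ne_Xn _)
    · exact absurd hab (em_ne_Xn _)
    · exact C.inputs_inj (em_inj hab)
  leader_not_input := by
    intro k
    by_cases hk : k = i <;> simp only [hk, ite_true, ite_false]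
    · exact Xn_ne_Ln
    · exact em_ne_Ln _

lemma lift_output (C : CRN d (Fin n)) (i : Fin d) (j : ℕ) :
    (lift C i j).output = em C.output := rfl

/-- From `E r ≤ E c + w`, deduce `r ≤ c` (for `w` vanishing on old species). -/
lemma le_of_E_le {r c : Fin n → ℕ} {w : Fin (n + 2) → ℕ}
    (hw : ∀ t : Fin n, w (em t) = 0) (h : E r ≤ E c + w) : r ≤ c := by
  intro t
  have h1 := h (em t)
  have h2 : E r (em t) ≤ E c (em t) + w (em t) := h1
  rw [E_em, E_em, hw t] at h2
  show r t ≤ c t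
  omega

lemma sub_add_E {r p c : Fin n → ℕ} (w : Fin (n + 2) → ℕ) (hrc : r ≤ c) :
    (E c + w) - E r + E p = E (c - r + p) + w := by
  funext s
  show E c s + w s - E r s + E p s = E (c - r + p) s + w s
  by_cases h : s.val < n
  · have e1 : E c s = c ⟨s.val, h⟩ := dif_pos h
    have e2 : E r s = r ⟨s.val, h⟩ := dif_pos h
    have e3 : E p s = p ⟨s.val, h⟩ := dif_pos h
    have e4 : E (c - r + p) s = c ⟨s.val, h⟩ - r ⟨s.val, h⟩ + p ⟨s.val, h⟩ := dif_pos h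
    have hle : r ⟨s.val, h⟩ ≤ c ⟨s.val, h⟩ := hrc ⟨s.val, h⟩
    rw [e1, e2, e3, e4]
    omega
  · have e1 : E c s = 0 := dif_neg h
    have e2 : E r s = 0 := dif_neg h
    have e3 : E p s = 0 := dif_neg h
    have e4 : E (c - r + p) s = 0 := dif_neg h
    rw [e1, e2, e3, e4]
    omega

/-- Lift an old step, with arbitrary extra junk `w` on the two new species. -/
lemma lift_step (C : CRN d (Fin n)) (i : Fin d) (j : ℕ) {c c' : Fin n → ℕ}
    (w : Fin (n + 2) → ℕ) (h : C.Step c c') :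
    (lift C i j).Step (E c + w) (E c' + w) := by
  obtain ⟨rp, hm, hle, rfl⟩ := h
  refine ⟨(E rp.1, E rp.2), ?_, ?_, ?_⟩
  · exact Finset.mem_union_left _ (Finset.mem_image_of_mem _ hm)
  · intro s
    show E rp.1 s ≤ E c s + w s
    by_cases hs : s.val < n
    · have e1 : E rp.1 s = rp.1 ⟨s.val, hs⟩ := dif_pos hs
      have e2 : E c s = c ⟨s.val, hs⟩ := dif_pos hs
      have hh : rp.1 ⟨s.val, hs⟩ ≤ c ⟨s.val, hs⟩ := hle ⟨s.val, hs⟩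
      rw [e1, e2]
      omega
    · have e1 : E rp.1 s = 0 := dif_neg hs
      rw [e1]
      omega
  · exact (sub_add_E w hle).symm

lemma lift_reach (C : CRN d (Fin n)) (i : Fin d) (j : ℕ) {c c' : Fin n → ℕ}
    (w : Fin (n + 2) → ℕ) (h : C.Reachable c c') :
    (lift C i j).Reachable (E c + w) (E c' + w) := by
  induction h with
  | refl => exact Relation.ReflTransGen.refl
  | tail _ hstep ih => exact ih.tail (lift_step C i j w hstep)

/-- Steps are monotone under adding extra tokens. -/
lemma step_mono (C : CRN d (Fin n)) {a b : Fin n → ℕ} (h : C.Step a b) (w : Fin n → ℕ) :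
    C.Step (a + w) (b + w) := by
  obtain ⟨rp, hm, hle, rfl⟩ := h
  refine ⟨rp, hm, ?_, ?_⟩
  · intro s
    have h2 : rp.1 s ≤ a s := hle s
    show rp.1 s ≤ a s + w s
    omega
  · funext s
    have h2 : rp.1 s ≤ a s := hle s
    show a s - rp.1 s + rp.2 s + w s = a s + w s - rp.1 s + rp.2 s
    omega

lemma reach_mono (C : CRN d (Fin n)) {a b : Fin n → ℕ} (h : C.Reachable a b) (w : Fin n → ℕ) :
    C.Reachable (a + w) (b + w) := by
  induction h with
  | refl => exact Relation.ReflTransGen.refl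
  | tail _ hstep ih => exact ih.tail (step_mono C hstep w)

lemma wGm (m : ℕ) (t : Fin n) : (G n m) (em t) = 0 := G_em m t

lemma wGD (m : ℕ) (t : Fin n) : (G n m + D n) (em t) = 0 := by
  show G n m (em t) + D n (em t) = 0
  rw [G_em, D_em]

/-- Reachability from an embedded configuration (new leader absent) stays embedded. -/
lemma reach_emb (C : CRN d (Fin n)) (i : Fin d) (j m : ℕ) {c₀ : Fin n → ℕ}
    {c' : Fin (n + 2) → ℕ} (h : (lift C i j).Reachable (E c₀ + G n m) c') :
    ∃ c, c' = E c + G n m ∧ C.Reachable c₀ c := by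
  induction h with
  | refl => exact ⟨c₀, rfl, Relation.ReflTransGen.refl⟩
  | tail _ hstep ih =>
    obtain ⟨c, rfl, hc⟩ := ih
    obtain ⟨rp, hm, hle, rfl⟩ := hstep
    rcases Finset.mem_union.1 hm with hm' | hm'
    · obtain ⟨⟨r, p⟩, hmem, heq⟩ := Finset.mem_image.1 hm'
      cases heq
      have hrc : r ≤ c := le_of_E_le (wGm m) hle
      exact ⟨c - r + p, sub_add_E _ hrc, hc.tail ⟨(r, p), hmem, hrc, rfl⟩⟩
    · exfalso
      rw [Finset.mem_singleton] at hm'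
      subst hm'
      have h1 : D n (Ln n) ≤ E c (Ln n) + G n m (Ln n) := hle (Ln n)
      rw [D_Ln, E_Ln, G_Ln] at h1
      omega

/-- Firing the special reaction from a leader-carrying embedded configuration. -/
lemma spec_fire (C : CRN d (Fin n)) (i : Fin d) (j m : ℕ) (c : Fin n → ℕ) :
    (E c + G n m + D n) - D n + E (J C i j) = E (c + J C i j) + G n m := by
  rw [E_add]
  funext s
  show E c s + G n m s + D n s - D n s + E (J C i j) s
      = E c s + E (J C i j) s + G n m s
  omega

lemma spec_step (C : CRN d (Fin n)) (i : Fin d) (j m : ℕ) (c : Fin n → ℕ) :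
    (lift C i j).Step (E c + G n m + D n) (E (c + J C i j) + G n m) := by
  refine ⟨(D n, E (J C i j)), Finset.mem_union_right _ (Finset.mem_singleton_self _), ?_, ?_⟩
  · intro s
    show D n s ≤ E c s + G n m s + D n s
    omega
  · exact (spec_fire C i j m c).symm

/-- The key invariant: configurations reachable from a leader-carrying embedded
configuration are either still leader-carrying (old part reachable), or embedded
with the injection `J` having been added. -/
lemma reach_inv (C : CRN d (Fin n)) (i : Fin d) (j m : ℕ) {c₀ : Fin n → ℕ}
    {c' : Fin (n + 2) → ℕ} (h : (lift C i j).Reachable (E c₀ + G n m + D n) c') :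
    (∃ c, c' = E c + G n m + D n ∧ C.Reachable c₀ c) ∨
    (∃ c, c' = E c + G n m ∧ C.Reachable (c₀ + J C i j) c) := by
  induction h with
  | refl => exact Or.inl ⟨c₀, rfl, Relation.ReflTransGen.refl⟩
  | tail _ hstep ih =>
    rcases ih with ⟨c, rfl, hc⟩ | ⟨c, rfl, hc⟩
    · obtain ⟨rp, hm, hle, rfl⟩ := hstep
      rcases Finset.mem_union.1 hm with hm' | hm'
      · obtain ⟨⟨r, p⟩, hmem, heq⟩ := Finset.mem_image.1 hm'
        cases heq
        have hle' : E r ≤ E c + (G n m + D n) := by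
          rw [← add_assoc]; exact hle
        have hrc : r ≤ c := le_of_E_le (wGD m) hle'
        refine Or.inl ⟨c - r + p, ?_, hc.tail ⟨(r, p), hmem, hrc, rfl⟩⟩
        have h5 := sub_add_E (r := r) (p := p) (c := c) (G n m + D n) hrc
        rw [← add_assoc, ← add_assoc] at h5
        exact h5
      · rw [Finset.mem_singleton] at hm'
        subst hm'
        exact Or.inr ⟨c + J C i j, spec_fire C i j m c, reach_mono C hc _⟩
    · obtain ⟨c₁, h₁, h₂⟩ := reach_emb C i j m (Relation.ReflTransGen.single hstep)
      exact Or.inr ⟨c₁, h₁, hc.trans h₂⟩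

lemma lift_stable (C : CRN d (Fin n)) (i : Fin d) (j m : ℕ) {o : Fin n → ℕ}
    (ho : C.Stable o) : (lift C i j).Stable (E o + G n m) := by
  intro c' h
  obtain ⟨c, rfl, hc⟩ := reach_emb C i j m h
  show (E c + G n m) (em C.output) = (E o + G n m) (em C.output)
  have h1 : (E c + G n m) (em C.output) = c C.output := by
    show E c (em C.output) + G n m (em C.output) = c C.output
    rw [E_em, G_em]
    omega
  have h2 : (E o + G n m) (em C.output) = o C.output := by
    show E o (em C.output) + G n m (em C.output) = o C.output
    rw [E_em, G_em]
    omega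
  rw [h1, h2]
  exact ho c hc

/-- The old-species part of the lifted initial configuration. -/
def base (C : CRN d (Fin n)) (i : Fin d) (x : Fin d → ℕ) : Fin n → ℕ :=
  fun t => ∑ k, if C.inputs k = t then Function.update x i 0 k else 0

lemma base_add_J (C : CRN d (Fin n)) (i : Fin d) (j : ℕ) (x : Fin d → ℕ) :
    base C i x + J C i j = C.init (Function.update x i j) := by
  funext t
  show base C i x t + J C i j t
      = (∑ k, if C.inputs k = t then Function.update x i j k else 0)
        + (if t = C.leader then 1 else 0)
  have h1 : ∀ k : Fin d, (if C.inputs k = t then Function.update x i j k else 0)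
      = (if C.inputs k = t then Function.update x i 0 k else 0)
        + (if k = i then (if C.inputs k = t then j else 0) else 0) := by
    intro k
    by_cases hk : k = i
    · subst hk; simp [Function.update_self]
    · simp [hk, Function.update_of_ne hk]
  rw [Finset.sum_congr rfl (fun k _ => h1 k), Finset.sum_add_distrib]
  have h2 : (∑ k : Fin d, if k = i then (if C.inputs k = t then j else 0) else 0)
      = (if C.inputs i = t then j else 0) := by
    rw [Finset.sum_ite_eq' Finset.univ i (fun k => if C.inputs k = t then j else 0)]
    simp
  rw [h2]
  have h3 : (if C.inputs i = t then j else 0) = (if t = C.inputs i then j else 0) := by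
    by_cases h : C.inputs i = t
    · rw [if_pos h, if_pos h.symm]
    · rw [if_neg h, if_neg (fun hh => h hh.symm)]
  rw [h3]
  show base C i x t + ((if t = C.inputs i then j else 0) + (if t = C.leader then 1 else 0))
      = base C i x t + (if t = C.inputs i then j else 0) + (if t = C.leader then 1 else 0)
  ring

lemma lift_init (C : CRN d (Fin n)) (i : Fin d) (j : ℕ) (x : Fin d → ℕ) :
    (lift C i j).init x = E (base C i x) + G n (x i) + D n := by
  funext s
  show (∑ k, if (if k = i then Xn n else em (C.inputs k)) = s then x k else 0)
      + (if s = Ln n then 1 else 0)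
      = E (base C i x) s + G n (x i) s + D n s
  by_cases h : s.val < n
  · obtain ⟨t, rfl⟩ : ∃ t : Fin n, s = em t := ⟨⟨s.val, h⟩, Fin.ext rfl⟩
    rw [E_em, G_em, D_em, if_neg (em_ne_Ln t)]
    have hsum : ∀ k : Fin d,
        (if (if k = i then Xn n else em (C.inputs k)) = em t then x k else 0)
        = (if C.inputs k = t then Function.update x i 0 k else 0) := by
      intro k
      by_cases hk : k = i
      · subst hk
        rw [if_pos rfl, if_neg (fun hh => em_ne_Xn t hh.symm), Function.update_self, ite_self]
      · rw [if_neg hk, Function.update_of_ne hk]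
        by_cases hc : C.inputs k = t
        · rw [if_pos (by rw [hc]), if_pos hc]
        · rw [if_neg (fun hh => hc (em_inj hh)), if_neg hc]
    rw [Finset.sum_congr rfl (fun k _ => hsum k)]
    show base C i x t + 0 = base C i x t + 0 + 0
    omega
  · by_cases h2 : s.val = n
    · obtain rfl : s = Xn n := Fin.ext h2
      rw [E_Xn, D_Xn, G_Xn, if_neg Xn_ne_Ln]
      have hsum : ∀ k : Fin d,
          (if (if k = i then Xn n else em (C.inputs k)) = Xn n then x k else 0)
          = (if k = i then x k else 0) := by
        intro k
        by_cases hk : k = i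
        · rw [if_pos hk, if_pos rfl, if_pos hk]
        · rw [if_neg hk, if_neg hk, if_neg (em_ne_Xn _)]
      rw [Finset.sum_congr rfl (fun k _ => hsum k), Finset.sum_ite_eq' Finset.univ i x]
      simp
    · obtain rfl : s = Ln n := Fin.ext (by have h3 := s.isLt; simp only [Ln]; omega)
      rw [E_Ln, G_Ln, D_Ln, if_pos rfl]
      have hsum : ∀ k : Fin d,
          (if (if k = i then Xn n else em (C.inputs k)) = Ln n then x k else 0) = 0 := by
        intro k
        by_cases hk : k = i
        · rw [if_pos hk, if_neg Xn_ne_Ln]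
        · rw [if_neg hk, if_neg (em_ne_Ln _)]
      rw [Finset.sum_congr rfl (fun k _ => hsum k)]
      simp

end CRNRestrict

/-- If `f` is obliviously-computable, so is every fixed-input restriction
`f_{[x(i)→j]}`. -/
theorem fixedInputRestriction_obliviouslyComputable {d : ℕ} (f : (Fin d → ℕ) → ℕ)
    (hf : ObliviouslyComputable f) :
    ∀ (i : Fin d) (j : ℕ),
      ObliviouslyComputable fun x => f (Function.update x i j) := by
  intro i j
  obtain ⟨n, C, hob, hsc⟩ := hf
  refine ⟨n + 2, CRNRestrict.lift C i j, ?_, ?_⟩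
  · intro rp hm
    rcases Finset.mem_union.1 hm with hm' | hm'
    · obtain ⟨⟨r, p⟩, hmem, heq⟩ := Finset.mem_image.1 hm'
      cases heq
      show CRNRestrict.E r (CRNRestrict.lift C i j).output = 0
      rw [CRNRestrict.lift_output, CRNRestrict.E_em]
      exact hob (r, p) hmem
    · rw [Finset.mem_singleton] at hm'
      subst hm'
      show CRNRestrict.D n (CRNRestrict.lift C i j).output = 0
      rw [CRNRestrict.lift_output, CRNRestrict.D_em]
  · intro x c hrc
    rw [CRNRestrict.lift_init] at hrc
    rcases CRNRestrict.reach_inv C i j (x i) hrc with ⟨cc, rfl, hcc⟩ | ⟨cc, rfl, hcc⟩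
    · obtain ⟨o, ho1, ho2, ho3⟩ := hsc (Function.update x i j) (cc + CRNRestrict.J C i j)
        (by rw [← CRNRestrict.base_add_J C i j x]; exact CRNRestrict.reach_mono C hcc _)
      refine ⟨CRNRestrict.E o + CRNRestrict.G n (x i),
        Relation.ReflTransGen.head (CRNRestrict.spec_step C i j (x i) cc)
          (CRNRestrict.lift_reach C i j _ ho1),
        CRNRestrict.lift_stable C i j (x i) ho2, ?_⟩
      show CRNRestrict.E o (CRNRestrict.lift C i j).output
          + CRNRestrict.G n (x i) (CRNRestrict.lift C i j).output = f (Function.update x i j)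
      rw [CRNRestrict.lift_output, CRNRestrict.E_em, CRNRestrict.G_em, ho3]
      omega
    · rw [CRNRestrict.base_add_J C i j x] at hcc
      obtain ⟨o, ho1, ho2, ho3⟩ := hsc (Function.update x i j) cc hcc
      refine ⟨CRNRestrict.E o + CRNRestrict.G n (x i),
        CRNRestrict.lift_reach C i j _ ho1,
        CRNRestrict.lift_stable C i j (x i) ho2, ?_⟩
      show CRNRestrict.E o (CRNRestrict.lift C i j).output
          + CRNRestrict.G n (x i) (CRNRestrict.lift C i j).output = f (Function.update x i j)
      rw [CRNRestrict.lift_output, CRNRestrict.E_em, CRNRestrict.G_em, ho3]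
      omega
end

section
/- A function f : ℕ^d → ℕ is stably computable by an output-oblivious CRN if and only if f is stably computable by an output-monotonic CRN (one in which no reaction can decrease the count of the output species, i.e., r(Y) ≤ p(Y) for every reaction (r, p)). -/
/-!
An output-oblivious CRN is output-monotonic, so only the converse needs work. Given an
output-monotonic CRN with output species `Y`, keep `Y` as an ordinary species and add a fresh
output species `out` that is never consumed: each reaction `(r, p)` additionally produces
`p(Y) - r(Y)` copies of `out`, and monotonicity makes this exactly the net change of `Y`, so
`#out = #Y` is invariant. Initial copies of `Y` (when `Y` is an input or the leader) start in a
fresh species `held` and are released by `held → Y + out`. Counting `held` as `Y` turns every run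
of the new network into a run of the old one; conversely, once `held` is exhausted every old run
lifts back. Hence the new network reaches a stable configuration with the correct output exactly
where the old one does.
-/

theorem Relation.ReflTransGen.exists_lift {α β : Type*} {r : α → α → Prop}
    {s : β → β → Prop} (π : α → β) {P : α → Prop}
    (hlift : ∀ a b, P a → s (π a) b → ∃ a', r a a' ∧ P a' ∧ π a' = b)
    {a : α} {b : β} (hs : Relation.ReflTransGen s (π a) b) (ha : P a) :
    ∃ a', Relation.ReflTransGen r a a' ∧ P a' ∧ π a' = b := by
  induction hs with
  | refl => exact ⟨a, .refl, ha, rfl⟩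
  | tail _ hbc ih =>
    obtain ⟨a₁, h₁, hP₁, rfl⟩ := ih
    obtain ⟨a₂, h₂, hP₂, rfl⟩ := hlift _ _ hP₁ hbc
    exact ⟨a₂, h₁.tail h₂, hP₂, rfl⟩

namespace CRN

variable {d : ℕ} {σ : Type} [Fintype σ] [DecidableEq σ]

theorem OutputOblivious.outputMonotonic {C : CRN d σ} (hC : C.OutputOblivious) :
    C.OutputMonotonic :=
  fun rp hrp => (hC rp hrp).trans_le (Nat.zero_le _)

theorem init_eq_zero (C : CRN d σ) (x : Fin d → ℕ) {s : σ} (hin : ∀ i, C.inputs i ≠ s)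
    (hl : s ≠ C.leader) : C.init x s = 0 := by
  simp [init, hin, hl]

theorem init_apply_map {τ : Type} [Fintype τ] [DecidableEq τ] (C : CRN d σ) (D : CRN d τ)
    {e : σ → τ} (he : Function.Injective e) (hin : ∀ i, D.inputs i = e (C.inputs i))
    (hl : D.leader = e C.leader) (x : Fin d → ℕ) (t : σ) : D.init x (e t) = C.init x t := by
  simp [init, hin, hl, he.eq_iff]

namespace toOblivious

variable {n : ℕ}

def old (t : Fin n) : Fin (n + 2) := t.castSucc.castSucc

def held (n : ℕ) : Fin (n + 2) := (Fin.last n).castSucc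

def out (n : ℕ) : Fin (n + 2) := Fin.last (n + 1)

def extend (v : Fin n → ℕ) (a y : ℕ) : Fin (n + 2) → ℕ :=
  Fin.snoc (α := fun _ => ℕ) (Fin.snoc (α := fun _ => ℕ) v a) y

@[simp] theorem extend_old (v : Fin n → ℕ) (a y : ℕ) (t : Fin n) :
    extend v a y (old t) = v t := by
  simp [extend, old]

@[simp] theorem extend_held (v : Fin n → ℕ) (a y : ℕ) : extend v a y (held n) = a := by
  simp [extend, held]

@[simp] theorem extend_out (v : Fin n → ℕ) (a y : ℕ) : extend v a y (out n) = y := by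
  simp [extend, out]

theorem extend_le_iff {v : Fin n → ℕ} {a y : ℕ} {c : Fin (n + 2) → ℕ} :
    extend v a y ≤ c ↔ (∀ t, v t ≤ c (old t)) ∧ a ≤ c (held n) ∧ y ≤ c (out n) := by
  simp only [Pi.le_def, Fin.forall_fin_succ' (n := n + 1), Fin.forall_fin_succ' (n := n)]
  simp [extend, old, held, out, and_assoc]

theorem old_injective : Function.Injective (old (n := n)) :=
  (Fin.castSucc_injective _).comp (Fin.castSucc_injective _)

theorem old_ne_held (t : Fin n) : old t ≠ held n :=
  (Fin.castSucc_injective _).ne (Fin.castSucc_lt_last t).ne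

theorem old_ne_out (t : Fin n) : old t ≠ out n :=
  (Fin.castSucc_lt_last _).ne

theorem held_ne_out : held n ≠ out n :=
  (Fin.castSucc_lt_last _).ne

def lift (Y t : Fin n) : Fin (n + 2) := if t = Y then held n else old t

theorem lift_injective (Y : Fin n) : Function.Injective (lift Y) := by
  intro t t' h
  unfold lift at h
  split_ifs at h with ht ht'
  · exact ht.trans ht'.symm
  · exact absurd h.symm (old_ne_held _)
  · exact absurd h (old_ne_held _)
  · exact old_injective h

theorem lift_ne_out (Y t : Fin n) : lift Y t ≠ out n := by
  unfold lift
  split_ifs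
  · exact held_ne_out
  · exact old_ne_out t

theorem lift_ne_old_self (Y t : Fin n) : lift Y t ≠ old Y := by
  unfold lift
  split_ifs with ht
  · exact (old_ne_held Y).symm
  · exact fun h => ht (old_injective h)

def liftReaction (Y : Fin n) (rp : (Fin n → ℕ) × (Fin n → ℕ)) :
    (Fin (n + 2) → ℕ) × (Fin (n + 2) → ℕ) :=
  (extend rp.1 0 0, extend rp.2 0 (rp.2 Y - rp.1 Y))

def release (Y : Fin n) : (Fin (n + 2) → ℕ) × (Fin (n + 2) → ℕ) :=
  (extend 0 1 0, extend (Pi.single Y 1) 0 1)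

/-- Held-back tokens are counted as copies of the output species `Y`. -/
def proj (Y : Fin n) (c : Fin (n + 2) → ℕ) : Fin n → ℕ :=
  c ∘ old + Pi.single Y (c (held n))

theorem proj_apply (Y : Fin n) (c : Fin (n + 2) → ℕ) (t : Fin n) :
    proj Y c t = c (old t) + if t = Y then c (held n) else 0 := by
  simp [proj, Pi.single_apply]

end toOblivious

open toOblivious

variable {n : ℕ}

def toOblivious (C : CRN d (Fin n)) : CRN d (Fin (n + 2)) where
  reactions := insert (release C.output) (C.reactions.image (liftReaction C.output))
  inputs := lift C.output ∘ C.inputs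
  output := out n
  leader := lift C.output C.leader
  inputs_inj := (lift_injective _).comp C.inputs_inj
  leader_not_input i := (lift_injective _).ne (C.leader_not_input i)

@[simp] theorem toOblivious_output (C : CRN d (Fin n)) : C.toOblivious.output = out n := rfl

namespace toOblivious

variable (C : CRN d (Fin n))

theorem mem_reactions {rp : (Fin (n + 2) → ℕ) × (Fin (n + 2) → ℕ)} :
    rp ∈ C.toOblivious.reactions ↔
      rp = release C.output ∨ ∃ rp₀ ∈ C.reactions, liftReaction C.output rp₀ = rp := by
  simp [toOblivious]

theorem outputOblivious : C.toOblivious.OutputOblivious := by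
  intro rp hrp
  rcases (mem_reactions C).mp hrp with rfl | ⟨rp, -, rfl⟩ <;> simp [release, liftReaction]

theorem step_cases {c c' : Fin (n + 2) → ℕ} (h : C.toOblivious.Step c c') :
    (∃ rp ∈ C.reactions, (∀ t, rp.1 t ≤ c (old t)) ∧
      c' = c - (liftReaction C.output rp).1 + (liftReaction C.output rp).2) ∨
    (1 ≤ c (held n) ∧ c' = c - (release C.output).1 + (release C.output).2) := by
  obtain ⟨rp', hrp', hle, rfl⟩ := h
  rcases (mem_reactions C).mp hrp' with rfl | ⟨rp, hrp, rfl⟩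
  · exact Or.inr ⟨(extend_le_iff.mp hle).2.1, rfl⟩
  · exact Or.inl ⟨rp, hrp, (extend_le_iff.mp hle).1, rfl⟩

variable {C}

theorem reflTransGen_proj_of_step {c c' : Fin (n + 2) → ℕ} (h : C.toOblivious.Step c c') :
    Relation.ReflTransGen C.Step (proj C.output c) (proj C.output c') := by
  rcases step_cases C h with ⟨rp, hrp, hle, rfl⟩ | ⟨hA, rfl⟩
  · refine .single ⟨rp, hrp, fun t => ?_, funext fun t => ?_⟩
    · have := hle t
      simp only [proj_apply]
      omega
    · have := hle t
      simp only [proj_apply, liftReaction, Pi.add_apply, Pi.sub_apply, extend_old, extend_held]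
      split_ifs <;> omega
  · convert Relation.ReflTransGen.refl using 1
    funext t
    simp only [proj_apply, release, Pi.add_apply, Pi.sub_apply, extend_old, extend_held,
      Pi.zero_apply, Pi.single_apply]
    split_ifs <;> omega

theorem held_le_of_step {c c' : Fin (n + 2) → ℕ} (h : C.toOblivious.Step c c') :
    c' (held n) ≤ c (held n) := by
  rcases step_cases C h with ⟨rp, -, -, rfl⟩ | ⟨-, rfl⟩ <;>
    simp [liftReaction, release]

theorem out_eq_old_of_step (hC : C.OutputMonotonic) {c c' : Fin (n + 2) → ℕ}
    (h : C.toOblivious.Step c c') (hc : c (out n) = c (old C.output)) :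
    c' (out n) = c' (old C.output) := by
  rcases step_cases C h with ⟨rp, hrp, hle, rfl⟩ | ⟨-, rfl⟩
  · have := hle C.output
    have := hC rp hrp
    simp only [liftReaction, Pi.add_apply, Pi.sub_apply, extend_old, extend_out]
    omega
  · simp [release, hc]

theorem lift_step {c : Fin (n + 2) → ℕ} (hc : c (held n) = 0) {e : Fin n → ℕ}
    (h : C.Step (proj C.output c) e) :
    ∃ c', C.toOblivious.Step c c' ∧ c' (held n) = 0 ∧ proj C.output c' = e := by
  obtain ⟨rp, hrp, hle, rfl⟩ := h
  have hle' : ∀ t, rp.1 t ≤ c (old t) := fun t => by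
    simpa [proj_apply, hc] using hle t
  refine ⟨_, ⟨liftReaction C.output rp, (mem_reactions C).mpr (.inr ⟨rp, hrp, rfl⟩),
    extend_le_iff.mpr ⟨hle', by simp, by simp⟩, rfl⟩, by simp [liftReaction, hc], ?_⟩
  funext t
  have := hle' t
  simp only [proj_apply, liftReaction, Pi.add_apply, Pi.sub_apply, extend_old, extend_held, hc]
  split_ifs <;> omega

theorem reachable_proj {c c' : Fin (n + 2) → ℕ} (h : C.toOblivious.Reachable c c') :
    C.Reachable (proj C.output c) (proj C.output c') :=
  Relation.ReflTransGen.lift' _ (fun _ _ => reflTransGen_proj_of_step) _ _ h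

theorem held_le_of_reachable {c c' : Fin (n + 2) → ℕ} (h : C.toOblivious.Reachable c c') :
    c' (held n) ≤ c (held n) := by
  induction h with
  | refl => exact le_rfl
  | tail _ hstep ih => exact (held_le_of_step hstep).trans ih

theorem out_eq_old_of_reachable (hC : C.OutputMonotonic) {c c' : Fin (n + 2) → ℕ}
    (h : C.toOblivious.Reachable c c') (hc : c (out n) = c (old C.output)) :
    c' (out n) = c' (old C.output) := by
  induction h with
  | refl => exact hc
  | tail _ hstep ih => exact out_eq_old_of_step hC hstep ih

theorem exists_reachable_of_reachable_proj {c : Fin (n + 2) → ℕ} (hc : c (held n) = 0)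
    {e : Fin n → ℕ} (h : C.Reachable (proj C.output c) e) :
    ∃ c', C.toOblivious.Reachable c c' ∧ c' (held n) = 0 ∧ proj C.output c' = e :=
  Relation.ReflTransGen.exists_lift _ (fun _ _ hc h => lift_step hc h) h hc

theorem exists_reachable_held_eq_zero (c : Fin (n + 2) → ℕ) :
    ∃ c', C.toOblivious.Reachable c c' ∧ c' (held n) = 0 ∧
      proj C.output c' = proj C.output c := by
  induction hk : c (held n) generalizing c with
  | zero => exact ⟨c, .refl, hk, rfl⟩
  | succ k ih =>
    set c₁ := c - (release C.output).1 + (release C.output).2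
    have hstep : C.toOblivious.Step c c₁ :=
      ⟨_, (mem_reactions C).mpr (.inl rfl),
        extend_le_iff.mpr ⟨by simp, by omega, by simp⟩, rfl⟩
    obtain ⟨c', hreach, hc', hproj⟩ := ih c₁ (by simp [c₁, release, hk])
    refine ⟨c', .head hstep hreach, hc', hproj.trans ?_⟩
    funext t
    simp only [c₁, proj_apply, release, Pi.add_apply, Pi.sub_apply, extend_old, extend_held,
      Pi.zero_apply, Pi.single_apply]
    split_ifs <;> omega

variable (C)

theorem init_out (x : Fin d → ℕ) : C.toOblivious.init x (out n) = 0 :=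
  init_eq_zero _ _ (fun _ => lift_ne_out _ _) (lift_ne_out _ _).symm

theorem init_old_output (x : Fin d → ℕ) : C.toOblivious.init x (old C.output) = 0 :=
  init_eq_zero _ _ (fun _ => lift_ne_old_self _ _) (lift_ne_old_self _ _).symm

theorem proj_init (x : Fin d → ℕ) : proj C.output (C.toOblivious.init x) = C.init x := by
  have hinit := init_apply_map C C.toOblivious (lift_injective C.output) (fun _ => rfl) rfl x
  funext t
  rw [proj_apply]
  by_cases ht : t = C.output
  · subst ht
    simpa [init_old_output, lift] using hinit C.output
  · simpa [ht, lift] using hinit t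

theorem stablyComputes (hC : C.OutputMonotonic) {f : (Fin d → ℕ) → ℕ}
    (hf : C.StablyComputes f) :
    C.toOblivious.StablyComputes f := by
  intro x c hc
  have hc_out : c (out n) = c (old C.output) :=
    out_eq_old_of_reachable hC hc (by rw [init_out, init_old_output])
  obtain ⟨c₀, hc₀, hc₀_held, hc₀_proj⟩ := exists_reachable_held_eq_zero c
  obtain ⟨o, ho, ho_stable, ho_out⟩ := hf x (proj C.output c₀)
    (by rw [hc₀_proj]; simpa [proj_init] using reachable_proj hc)
  obtain ⟨c₁, hc₁, hc₁_held, rfl⟩ := exists_reachable_of_reachable_proj hc₀_held ho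
  have hcc₁ : C.toOblivious.Reachable c c₁ := Relation.ReflTransGen.trans hc₀ hc₁
  have hc₁_out := out_eq_old_of_reachable hC hcc₁ hc_out
  -- nothing is held back from `c₁` on, so the new output equals the projected old one
  have key : ∀ c₂, C.toOblivious.Reachable c₁ c₂ →
      c₂ (out n) = proj C.output c₂ C.output := by
    intro c₂ hc₂
    have := held_le_of_reachable hc₂
    rw [proj_apply, if_pos rfl, out_eq_old_of_reachable hC hc₂ hc₁_out]
    omega
  refine ⟨c₁, hcc₁, fun c₂ hc₂ => ?_, ?_⟩
  · simp only [toOblivious_output, key c₂ hc₂, key c₁ .refl]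
    exact ho_stable _ (reachable_proj hc₂)
  · simpa [key c₁ .refl] using ho_out

end toOblivious

end CRN

/-- `f` is stably computable by an output-oblivious CRN iff it is stably
computable by an output-monotonic CRN. -/
theorem outputOblivious_iff_outputMonotonic {d : ℕ} (f : (Fin d → ℕ) → ℕ) :
    (∃ (n : ℕ) (C : CRN d (Fin n)), C.OutputOblivious ∧ C.StablyComputes f) ↔
      (∃ (n : ℕ) (C : CRN d (Fin n)), C.OutputMonotonic ∧ C.StablyComputes f) := by
  constructor
  · rintro ⟨n, C, hC, hf⟩
    exact ⟨n, C, hC.outputMonotonic, hf⟩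
  · rintro ⟨n, C, hC, hf⟩
    exact ⟨n + 2, C.toOblivious, CRN.toOblivious.outputOblivious C,
      CRN.toOblivious.stablyComputes C hC hf⟩
end

section
/- If f : ℕ → ℕ is semilinear and nondecreasing, then f is eventually quilt-affine with periodic finite differences: there exist n ∈ ℕ, a period p ∈ ℕ_+, and nonnegative integers δ_0, …, δ_{p−1} such that for all x ≥ n, f(x+1) − f(x) = δ_{x mod p}. -/
private lemma per_mul {Q : ℕ → Prop} {N P : ℕ}
    (h : ∀ x, N ≤ x → (Q (x + P) ↔ Q x)) :
    ∀ j x, N ≤ x → (Q (x + j * P) ↔ Q x) := by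
  intro j
  induction j with
  | zero => intro x _; simp
  | succ j ih =>
    intro x hx
    have e : x + (j + 1) * P = (x + j * P) + P := by ring
    rw [e, h _ (by omega)]
    exact ih x hx

private lemma semilinear_eventually_periodic {A : Set (Fin 1 → ℕ)}
    (h : SemilinearSet 1 A) :
    ∃ N P, 0 < P ∧ ∀ x, N ≤ x →
      ((fun _ : Fin 1 => x + P) ∈ A ↔ (fun _ : Fin 1 => x) ∈ A) := by
  induction h with
  | threshold a b =>
    refine ⟨b.natAbs + 1, 1, one_pos, fun x hx => ?_⟩
    simp only [Set.mem_setOf_eq, Fin.sum_univ_one]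
    have hb1 : b ≤ (b.natAbs : ℤ) := Int.le_natAbs
    have hb2 : -(b.natAbs : ℤ) ≤ b := by omega
    have hx' : ((b.natAbs : ℤ) + 1) ≤ (x : ℤ) := by exact_mod_cast hx
    push_cast
    rcases lt_trichotomy (a 0) 0 with ha | ha | ha
    · constructor <;> intro hh <;> nlinarith
    · simp [ha]
    · constructor <;> intro hh <;> nlinarith
  | mod a b c hc =>
    refine ⟨0, c, hc, fun x _ => ?_⟩
    simp only [Set.mem_setOf_eq, Fin.sum_univ_one]
    have key : a 0 * ((x + c : ℕ) : ℤ) ≡ a 0 * (x : ℤ) [ZMOD (c : ℤ)] := by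
      have e : a 0 * ((x + c : ℕ) : ℤ) = a 0 * (x : ℤ) + a 0 * c := by push_cast; ring
      rw [e]
      have h0 : a 0 * (c : ℤ) ≡ 0 [ZMOD (c : ℤ)] :=
        (Int.modEq_zero_iff_dvd).mpr ⟨a 0, mul_comm _ _⟩
      simpa using (Int.ModEq.refl (a 0 * (x : ℤ))).add h0
    exact ⟨fun hh => key.symm.trans hh, fun hh => key.trans hh⟩
  | @union A B h1 h2 ih1 ih2 =>
    obtain ⟨N1, P1, hP1, hp1⟩ := ih1
    obtain ⟨N2, P2, hP2, hp2⟩ := ih2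
    refine ⟨max N1 N2, P1 * P2, Nat.mul_pos hP1 hP2, fun x hx => ?_⟩
    have e1 : ((fun _ : Fin 1 => x + P1 * P2) ∈ A ↔ (fun _ : Fin 1 => x) ∈ A) := by
      have := per_mul (Q := fun y => (fun _ : Fin 1 => y) ∈ A) hp1 P2 x (by omega)
      rwa [show x + P2 * P1 = x + P1 * P2 by ring] at this
    have e2 : ((fun _ : Fin 1 => x + P1 * P2) ∈ B ↔ (fun _ : Fin 1 => x) ∈ B) := by
      exact per_mul (Q := fun y => (fun _ : Fin 1 => y) ∈ B) hp2 P1 x (by omega)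
    simp only [Set.mem_union]
    rw [e1, e2]
  | @inter A B h1 h2 ih1 ih2 =>
    obtain ⟨N1, P1, hP1, hp1⟩ := ih1
    obtain ⟨N2, P2, hP2, hp2⟩ := ih2
    refine ⟨max N1 N2, P1 * P2, Nat.mul_pos hP1 hP2, fun x hx => ?_⟩
    have e1 : ((fun _ : Fin 1 => x + P1 * P2) ∈ A ↔ (fun _ : Fin 1 => x) ∈ A) := by
      have := per_mul (Q := fun y => (fun _ : Fin 1 => y) ∈ A) hp1 P2 x (by omega)
      rwa [show x + P2 * P1 = x + P1 * P2 by ring] at this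
    have e2 : ((fun _ : Fin 1 => x + P1 * P2) ∈ B ↔ (fun _ : Fin 1 => x) ∈ B) := by
      exact per_mul (Q := fun y => (fun _ : Fin 1 => y) ∈ B) hp2 P1 x (by omega)
    simp only [Set.mem_inter_iff]
    rw [e1, e2]
  | @compl A h1 ih1 =>
    obtain ⟨N1, P1, hP1, hp1⟩ := ih1
    refine ⟨N1, P1, hP1, fun x hx => ?_⟩
    simp only [Set.mem_compl_iff]
    rw [hp1 x hx]

private lemma int_le_of_forall_nat_add_mul_le {A B a c : ℤ}
    (h : ∀ t : ℕ, A + t * a ≤ B + t * c) : a ≤ c := by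
  by_contra hlt
  push_neg at hlt
  have h1 := h ((B - A).toNat + 1)
  have h2 : (B - A) < (((B - A).toNat + 1 : ℕ) : ℤ) := by
    have := Int.self_le_toNat (B - A); push_cast; omega
  have h3 : (0:ℤ) < (((B - A).toNat + 1 : ℕ) : ℤ) := by positivity
  nlinarith [mul_le_mul_of_nonneg_left (show c + 1 ≤ a by omega) (le_of_lt h3)]

/-- Every semilinear nondecreasing `f : ℕ → ℕ` is eventually quilt-affine, with
periodic finite differences: there are `n`, a period `p > 0`, and nonnegative
differences `δ` such that `f(x+1) − f(x) = δ(x mod p)` for all `x ≥ n`. -/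
theorem semilinear_monotone_eventually_quiltAffine (f : ℕ → ℕ)
    (hs : SemilinearFn fun x : Fin 1 → ℕ => f (x 0)) (hm : Monotone f) :
    ∃ (n p : ℕ), 0 < p ∧ ∃ δ : ℕ → ℕ,
      ∀ x, n ≤ x → f (x + 1) = f x + δ (x % p) := by
  obtain ⟨m, dom, grad, b, hS, hdisj, hcov, haff⟩ := hs
  choose N P hPpos hP using fun k => semilinear_eventually_periodic (hS k)
  set N0 : ℕ := ∑ k, N k with hN0def
  set P0 : ℕ := ∏ k, P k with hP0def
  have hP0pos : 0 < P0 := Finset.prod_pos (fun k _ => hPpos k)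
  have hper0 : ∀ k x, N0 ≤ x →
      ((fun _ : Fin 1 => x + P0) ∈ dom k ↔ (fun _ : Fin 1 => x) ∈ dom k) := by
    intro k x hx
    have hNk : N k ≤ N0 := Finset.single_le_sum (fun k _ => Nat.zero_le _) (Finset.mem_univ k)
    obtain ⟨t, ht⟩ : P k ∣ P0 := Finset.dvd_prod_of_mem _ (Finset.mem_univ k)
    have key := per_mul (Q := fun y => (fun _ : Fin 1 => y) ∈ dom k) (hP k) t x (le_trans hNk hx)
    have e : x + P0 = x + t * P k := by rw [ht]; ring
    rw [e]; exact key
  have hval : ∀ k y, (fun _ : Fin 1 => y) ∈ dom k → (f y : ℚ) = grad k 0 * y + b k := by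
    intro k y hk
    have e := haff k _ hk
    simpa [Fin.sum_univ_one] using e
  have step2 : ∀ x, N0 ≤ x → (f (x + 2 * P0) : ℤ) + f x = 2 * f (x + P0) := by
    intro x hx
    obtain ⟨k, hk⟩ := hcov (fun _ : Fin 1 => x)
    have hk1 : (fun _ : Fin 1 => x + P0) ∈ dom k := (hper0 k x hx).mpr hk
    have hk2 : (fun _ : Fin 1 => x + 2 * P0) ∈ dom k := by
      have h := (hper0 k (x + P0) (by omega)).mpr hk1
      rwa [show x + P0 + P0 = x + 2 * P0 by ring] at h
    have e0 := hval k x hk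
    have e1 := hval k (x + P0) hk1
    have e2 := hval k (x + 2 * P0) hk2
    have key : (f (x + 2 * P0) : ℚ) + f x = 2 * f (x + P0) := by
      push_cast at e0 e1 e2 ⊢; linarith
    exact_mod_cast key
  set D : ℕ → ℤ := fun x => (f (x + P0) : ℤ) - f x with hDdef
  have hDper : ∀ x, N0 ≤ x → D (x + P0) = D x := by
    intro x hx
    have h2 := step2 x hx
    simp only [hDdef]
    rw [show x + P0 + P0 = x + 2 * P0 by ring]
    omega
  have hDmul : ∀ x, N0 ≤ x → ∀ t : ℕ, D (x + t * P0) = D x := by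
    intro x hx t
    induction t with
    | zero => simp
    | succ t ih =>
      rw [show x + (t + 1) * P0 = (x + t * P0) + P0 by ring, hDper _ (by omega), ih]
  have hiter : ∀ x, N0 ≤ x → ∀ t : ℕ, (f (x + t * P0) : ℤ) = f x + t * D x := by
    intro x hx t
    induction t with
    | zero => simp
    | succ t ih =>
      rw [show x + (t + 1) * P0 = (x + t * P0) + P0 by ring]
      have hD : (f (x + t * P0 + P0) : ℤ) = f (x + t * P0) + D (x + t * P0) := by
        simp only [hDdef]; ring
      rw [hD, hDmul x hx t, ih]
      push_cast; ring
  have hsq : ∀ x, N0 ≤ x → D (x + 1) = D x := by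
    intro x hx
    have hle1 : ∀ t : ℕ, (f x : ℤ) + t * D x ≤ f (x + 1) + t * D (x + 1) := by
      intro t
      have hmono := hm (show x + t * P0 ≤ (x + 1) + t * P0 by omega)
      have e1 := hiter x hx t
      have e2 := hiter (x + 1) (by omega) t
      have hmono' : (f (x + t * P0) : ℤ) ≤ f ((x + 1) + t * P0) := by exact_mod_cast hmono
      linarith
    have hle2 : ∀ t : ℕ, (f (x + 1) : ℤ) + t * D (x + 1) ≤ f (x + P0) + t * D x := by
      intro t
      have hmono := hm (show (x + 1) + t * P0 ≤ (x + P0) + t * P0 by omega)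
      have e1 := hiter (x + 1) (by omega) t
      have e2 := hiter (x + P0) (by omega) t
      have e3 : D (x + P0) = D x := hDper x hx
      have hmono' : (f ((x + 1) + t * P0) : ℤ) ≤ f ((x + P0) + t * P0) := by exact_mod_cast hmono
      rw [e3] at e2
      linarith
    have g1 : D x ≤ D (x + 1) := int_le_of_forall_nat_add_mul_le hle1
    have g2 : D (x + 1) ≤ D x := int_le_of_forall_nat_add_mul_le hle2
    omega
  have hDconst : ∀ x, N0 ≤ x → D x = D N0 := by
    intro x hx
    induction x, hx using Nat.le_induction with
    | base => rfl
    | succ x hx ih => rw [hsq x hx, ih]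
  have hC : ∀ y, N0 ≤ y → ∀ t : ℕ, (f (y + t * P0) : ℤ) = f y + t * D N0 := by
    intro y hy t
    rw [hiter y hy t, hDconst y hy]
  refine ⟨N0 * P0 + P0, P0, hP0pos,
    fun r => f (N0 * P0 + r % P0 + 1) - f (N0 * P0 + r % P0), fun x hx => ?_⟩
  beta_reduce
  have hrr : x % P0 % P0 = x % P0 := Nat.mod_mod_of_dvd x dvd_rfl
  rw [hrr]
  set M : ℕ := N0 * P0 with hMdef
  set r : ℕ := x % P0 with hrdef
  have hrlt : r < P0 := Nat.mod_lt _ hP0pos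
  have hMN : N0 ≤ M := by
    calc N0 = N0 * 1 := (mul_one _).symm
    _ ≤ N0 * P0 := Nat.mul_le_mul_left _ hP0pos
  have hyN : N0 ≤ M + r := by omega
  have hymod : (M + r) % P0 = x % P0 := by
    rw [hMdef, Nat.add_comm, Nat.add_mul_mod_self_right, hrdef, hrr]
  have hyx : M + r ≤ x := by omega
  have hdvd : P0 ∣ x - (M + r) := (Nat.modEq_iff_dvd' hyx).mp hymod
  obtain ⟨t, ht⟩ := hdvd
  have hxeq : (M + r) + t * P0 = x := by rw [mul_comm]; omega
  have e1 := hC (M + r) hyN t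
  have e2 := hC (M + r + 1) (by omega) t
  rw [hxeq] at e1
  rw [show (M + r + 1) + t * P0 = x + 1 by omega] at e2
  have hmo : f (M + r) ≤ f (M + r + 1) := hm (by omega)
  have key : (f (x + 1) : ℤ) + f (M + r) = f x + f (M + r + 1) := by linarith
  omega
end

section
/- Let f : ℕ^d → ℕ be a semilinear function. Then there exist finitely many regions R_1, …, R_n ⊆ ℝ^d_{≥0} (each of the form {x ∈ ℝ^d_{≥0} : S(Tx − h) ≥ 0} for a common integer matrix T ∈ ℤ^{l×d} and offset vector h ∈ ℤ^l, where S ranges over diagonal ±1 sign matrices, and such that the regions partition ℕ^d) and a global period p ∈ ℕ_+ such that for each region R_i and each congruence class ā ∈ (ℤ/pℤ)^d there exist ∇ ∈ ℚ^d and b ∈ ℚ with f(x) = ∇·x + b for all integer points x ∈ R_i ∩ ā ∩ ℕ^d. -/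

private lemma semilinear_invariance {d : ℕ} {A : Set (Fin d → ℕ)} (hA : SemilinearSet d A) :
    ∃ (L : List ((Fin d → ℤ) × ℤ)) (p : ℕ), 0 < p ∧
      ∀ x y : Fin d → ℕ,
        (∀ t ∈ L, ((t.2 ≤ ∑ i, t.1 i * (x i : ℤ)) ↔ (t.2 ≤ ∑ i, t.1 i * (y i : ℤ)))) →
        (∀ i, x i ≡ y i [MOD p]) →
        (x ∈ A ↔ y ∈ A) := by
  induction hA with
  | threshold a b =>
      refine ⟨[(a, b)], 1, one_pos, fun x y hthr _ => ?_⟩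
      simpa using hthr (a, b) (by simp)
  | mod a b c hc =>
      refine ⟨[], c, hc, fun x y _ hmod => ?_⟩
      have hsum : (∑ i, a i * (x i : ℤ)) ≡ (∑ i, a i * (y i : ℤ)) [ZMOD (c : ℤ)] := by
        refine (ZMod.intCast_eq_intCast_iff _ _ _).mp ?_
        push_cast
        exact Finset.sum_congr rfl fun i _ => by
          rw [(ZMod.natCast_eq_natCast_iff _ _ _).mpr (hmod i)]
      exact ⟨fun hx => hsum.symm.trans hx, fun hy => hsum.trans hy⟩
  | union hA hB ihA ihB =>
      obtain ⟨L₁, p₁, hp₁, h₁⟩ := ihA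
      obtain ⟨L₂, p₂, hp₂, h₂⟩ := ihB
      refine ⟨L₁ ++ L₂, p₁ * p₂, Nat.mul_pos hp₁ hp₂, fun x y hthr hmod => ?_⟩
      exact or_congr
        (h₁ x y (fun t ht => hthr t (List.mem_append_left _ ht))
          (fun i => (hmod i).of_dvd (dvd_mul_right _ _)))
        (h₂ x y (fun t ht => hthr t (List.mem_append_right _ ht))
          (fun i => (hmod i).of_dvd (dvd_mul_left _ _)))
  | inter hA hB ihA ihB =>
      obtain ⟨L₁, p₁, hp₁, h₁⟩ := ihA
      obtain ⟨L₂, p₂, hp₂, h₂⟩ := ihB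
      refine ⟨L₁ ++ L₂, p₁ * p₂, Nat.mul_pos hp₁ hp₂, fun x y hthr hmod => ?_⟩
      exact and_congr
        (h₁ x y (fun t ht => hthr t (List.mem_append_left _ ht))
          (fun i => (hmod i).of_dvd (dvd_mul_right _ _)))
        (h₂ x y (fun t ht => hthr t (List.mem_append_right _ ht))
          (fun i => (hmod i).of_dvd (dvd_mul_left _ _)))
  | compl hA ihA =>
      obtain ⟨L, p, hp, h⟩ := ihA
      exact ⟨L, p, hp, fun x y hthr hmod => not_congr (h x y hthr hmod)⟩

/-- **Domain decomposition.** For a semilinear `f : ℕ^d → ℕ` there are finitely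
many regions (induced by sign choices `s` on a common family of threshold
hyperplanes `T x = h`, partitioning `ℕ^d`) and a global period `p` such that `f`
restricted to each region intersected with each congruence class mod `p` is a
rational affine partial function. -/
theorem semilinear_domain_decomposition {d : ℕ} (f : (Fin d → ℕ) → ℕ)
    (hf : SemilinearFn f) :
    ∃ (l : ℕ) (T : Fin l → Fin d → ℤ) (h : Fin l → ℤ) (nR : ℕ)
      (s : Fin nR → Fin l → ℤ) (p : ℕ),
      0 < p ∧
      (∀ r k, s r k = 1 ∨ s r k = -1) ∧
      (∀ x : Fin d → ℕ,
        ∃! r : Fin nR, ∀ k, 0 ≤ s r k * ((∑ i, T k i * (x i : ℤ)) - h k)) ∧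
      (∀ (r : Fin nR) (a : Fin d → ℕ), ∃ (grad : Fin d → ℚ) (b : ℚ),
        ∀ x : Fin d → ℕ,
          (∀ k, 0 ≤ s r k * ((∑ i, T k i * (x i : ℤ)) - h k)) →
          (∀ i, x i ≡ a i [MOD p]) →
          (f x : ℚ) = (∑ i, grad i * (x i : ℚ)) + b) := by
  
  classical
  obtain ⟨m, dom, grad, bb, hsem, hdisj, hcov, hval⟩ := hf
  choose L P hP hinv using fun k => semilinear_invariance (hsem k)
  set Ltot : List ((Fin d → ℤ) × ℤ) := (List.finRange m).flatMap L with hLtot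
  set l := Ltot.length with hl
  refine ⟨l, fun k i => 2 * (Ltot.get k).1 i, fun k => 2 * (Ltot.get k).2 - 1,
    2 ^ l, fun r k => if (finFunctionFinEquiv.symm r) k = 1 then 1 else -1,
    ∏ k : Fin m, P k, Finset.prod_pos fun k _ => hP k, ?_, ?_, ?_⟩
  · intro r k
    by_cases h : (finFunctionFinEquiv.symm r) k = 1 <;> simp [h]
  · -- existence and uniqueness of the region
    intro x
    have he : ∀ k : Fin l,
        (∑ i, (2 * (Ltot.get k).1 i) * (x i : ℤ)) - (2 * (Ltot.get k).2 - 1)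
          = 2 * ((∑ i, (Ltot.get k).1 i * (x i : ℤ)) - (Ltot.get k).2) + 1 := by
      intro k
      have h2 : (∑ i, (2 * (Ltot.get k).1 i) * (x i : ℤ))
          = 2 * ∑ i, (Ltot.get k).1 i * (x i : ℤ) := by
        rw [Finset.mul_sum]
        exact Finset.sum_congr rfl fun i _ => by ring
      rw [h2]; ring
    set pat : Fin l → Fin 2 := fun k =>
      if 0 ≤ (∑ i, (Ltot.get k).1 i * (x i : ℤ)) - (Ltot.get k).2 then 1 else 0 with hpat
    refine ⟨finFunctionFinEquiv pat, ?_, ?_⟩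
    · intro k
      beta_reduce
      rw [Equiv.symm_apply_apply, he k]
      by_cases h : 0 ≤ (∑ i, (Ltot.get k).1 i * (x i : ℤ)) - (Ltot.get k).2
      · have hpk : pat k = 1 := if_pos h
        rw [hpk, if_pos rfl]
        omega
      · have hpk : pat k = 0 := if_neg h
        rw [hpk, if_neg (by decide : ¬((0 : Fin 2) = 1))]
        omega
    · intro r hr
      have : finFunctionFinEquiv.symm r = pat := by
        funext k
        have hrk := hr k
        beta_reduce at hrk
        rw [he k] at hrk
        by_cases h : (finFunctionFinEquiv.symm r) k = 1
        · rw [if_pos h] at hrk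
          rw [h]
          simp only [hpat]
          rw [if_pos (by omega)]
        · rw [if_neg h] at hrk
          have h0 : (finFunctionFinEquiv.symm r) k = 0 := by omega
          rw [h0]
          simp only [hpat]
          rw [if_neg (by omega)]
      rw [← this, Equiv.apply_symm_apply]
  · -- affine on each region ∩ congruence class
    intro r a
    by_cases hex : ∃ x : Fin d → ℕ,
        (∀ k : Fin l, 0 ≤ (if (finFunctionFinEquiv.symm r) k = 1 then (1:ℤ) else -1) *
          ((∑ i, (2 * (Ltot.get k).1 i) * (x i : ℤ)) - (2 * (Ltot.get k).2 - 1))) ∧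
        (∀ i, x i ≡ a i [MOD ∏ k : Fin m, P k])
    · obtain ⟨x₀, hx₀, hm₀⟩ := hex
      obtain ⟨k₀, hk₀⟩ := hcov x₀
      refine ⟨grad k₀, bb k₀, fun x hx hmod => ?_⟩
      have hxdom : x ∈ dom k₀ := by
        rw [hinv k₀ x x₀ ?thr ?md]
        · exact hk₀
        case md =>
          intro i
          exact ((hmod i).trans (hm₀ i).symm).of_dvd
            (Finset.dvd_prod_of_mem _ (Finset.mem_univ k₀))
        case thr =>
          intro t ht
          have htmem : t ∈ Ltot := by
            rw [hLtot, List.mem_flatMap]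
            exact ⟨k₀, List.mem_finRange k₀, ht⟩
          obtain ⟨j, hj⟩ := List.mem_iff_get.mp htmem
          have hxj := hx j
          have hx₀j := hx₀ j
          beta_reduce at hxj
          have hej : ∀ y : Fin d → ℕ,
              (∑ i, (2 * (Ltot.get j).1 i) * (y i : ℤ)) - (2 * (Ltot.get j).2 - 1)
                = 2 * ((∑ i, (Ltot.get j).1 i * (y i : ℤ)) - (Ltot.get j).2) + 1 := by
            intro y
            have h2 : (∑ i, (2 * (Ltot.get j).1 i) * (y i : ℤ))
                = 2 * ∑ i, (Ltot.get j).1 i * (y i : ℤ) := by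
              rw [Finset.mul_sum]
              exact Finset.sum_congr rfl fun i _ => by ring
            rw [h2]; ring
          rw [hej x] at hxj
          rw [hej x₀] at hx₀j
          rw [← hj]
          by_cases h : (finFunctionFinEquiv.symm r) j = 1
          · rw [if_pos h] at hxj hx₀j
            constructor <;> intro <;> omega
          · rw [if_neg h] at hxj hx₀j
            constructor <;> intro <;> omega
      exact hval k₀ x hxdom
    · exact ⟨0, 0, fun x hx hmod => absurd ⟨x, hx, hmod⟩ hex⟩
end

section
/- Let A ⊂ ℝ^d be a rational affine subspace (an affine subspace defined by finitely many linear equations with rational coefficients) containing some point x ∈ ℕ^d. Then there exists a constant c > 0 such that for every p* ∈ ℕ_+ and every y ∈ ℤ^d with y ≡ x (mod p*) componentwise and y ∉ A, the Euclidean distance from y to A satisfies dist(y, A) ≥ c·p*. -/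
/-- View an integer vector as a point of Euclidean space. -/
def intToE {d : ℕ} (y : Fin d → ℤ) : EuclideanSpace ℝ (Fin d) :=
  WithLp.toLp 2 (fun i => (y i : ℝ))

/-- View a natural-number vector as a point of Euclidean space. -/
def natToE {d : ℕ} (x : Fin d → ℕ) : EuclideanSpace ℝ (Fin d) :=
  WithLp.toLp 2 (fun i => (x i : ℝ))

/-!
Write `A = {w | ∀ k, ⟪m k, w⟫ = b k}` with rational rows `m k`. If `y ∉ A`, some residual
`r = ⟪m k, y⟫ - b k` is nonzero. Since `x ∈ A`, `r = ⟪m k, y - x⟫`; clearing the denominators of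
`M` by a fixed integer `D` turns `D * r` into an integer combination of the entries of `y - x`,
all divisible by `p`, so `p ≤ |D * r|`. On the other hand, Cauchy–Schwarz against every `w ∈ A`
gives `|r| ≤ ‖m k‖ * dist(y, A)`.
-/

open Metric RealInnerProductSpace

theorem abs_inner_sub_le_norm_mul_infDist {E : Type*} [NormedAddCommGroup E]
    [InnerProductSpace ℝ E] {s : Set E} (hs : s.Nonempty) {v : E} {β : ℝ}
    (hv : ∀ w ∈ s, ⟪v, w⟫ = β) (y : E) : |⟪v, y⟫ - β| ≤ ‖v‖ * infDist y s := by
  have := hs.to_subtype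
  rw [infDist_eq_iInf, Real.mul_iInf_of_nonneg (norm_nonneg v)]
  refine le_ciInf fun w => ?_
  rw [← hv w w.2, ← inner_sub_right, dist_eq_norm]
  exact abs_real_inner_le_norm _ _

theorem exists_int_ne_zero_mul_eq_intCast {ι : Type*} [Finite ι] (K : Type*) [DivisionRing K]
    [CharZero K] (q : ι → ℚ) : ∃ D : ℤ, D ≠ 0 ∧ ∀ i, ∃ n : ℤ, (D : K) * q i = n := by
  obtain ⟨⟨D, hD⟩, hDq⟩ := IsLocalization.exist_integer_multiples_of_finite (nonZeroDivisors ℤ) q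
  refine ⟨D, nonZeroDivisors.ne_zero hD, fun i => ?_⟩
  obtain ⟨n, hn⟩ := hDq i
  refine ⟨n, ?_⟩
  simp only [algebraMap_int_eq, eq_intCast, zsmul_eq_mul] at hn
  exact_mod_cast hn.symm

theorem exists_pos_abs_inner_sub_le_mul_infDist {ι E : Type*} [Fintype ι] [NormedAddCommGroup E]
    [InnerProductSpace ℝ E] (v : ι → E) (β : ι → ℝ) (hne : {w | ∀ k, ⟪v k, w⟫ = β k}.Nonempty) :
    ∃ B > 0, ∀ y k, |⟪v k, y⟫ - β k| ≤ B * infDist y {w | ∀ k, ⟪v k, w⟫ = β k} := by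
  refine ⟨1 + ∑ k, ‖v k‖, by positivity, fun y k => ?_⟩
  have hvk : ‖v k‖ ≤ 1 + ∑ k, ‖v k‖ := le_add_of_nonneg_of_le zero_le_one
    (Finset.single_le_sum (fun j _ => norm_nonneg (v j)) (Finset.mem_univ k))
  exact (abs_inner_sub_le_norm_mul_infDist hne (fun w hw => hw k) y).trans
    (mul_le_mul_of_nonneg_right hvk infDist_nonneg)

theorem natCast_le_abs_mul_sum_of_dvd {ι K : Type*} [Fintype ι] [Field K] [LinearOrder K]
    [IsStrictOrderedRing K] {D : K} {q : ι → K} (hq : ∀ i, ∃ n : ℤ, D * q i = n) {p : ℕ}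
    {u : ι → ℤ} (hu : ∀ i, (p : ℤ) ∣ u i) (hne : D * ∑ i, q i * u i ≠ 0) :
    (p : K) ≤ |D * ∑ i, q i * u i| := by
  choose n hn using hq
  have hN : D * ∑ i, q i * u i = ((∑ i, n i * u i : ℤ) : K) := by
    simp only [Finset.mul_sum, ← mul_assoc, hn, Int.cast_sum, Int.cast_mul]
  rw [hN] at hne ⊢
  have hdvd : (p : ℤ) ∣ |∑ i, n i * u i| :=
    (dvd_abs _ _).mpr (Finset.dvd_sum fun i _ => (hu i).mul_left _)
  have := Int.le_of_dvd (abs_pos.mpr (by exact_mod_cast hne)) hdvd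
  rw [← Int.cast_abs]
  exact_mod_cast this

/-- **Distance of congruent lattice points to a rational affine subspace.**
Let `A ⊆ ℝ^d` be an affine subspace defined by finitely many linear equations with
rational coefficients, containing a point `x ∈ ℕ^d`.  Then there is `c > 0` such
that for every period `p* > 0`, every `y ∈ ℤ^d` with `y ≡ x (mod p*)` componentwise
and `y ∉ A` has Euclidean distance at least `c·p*` from `A`. -/
theorem dist_congruent_lattice_point_to_rational_affine_subspace
    {d l : ℕ} (M : Fin l → Fin d → ℚ) (b : Fin l → ℚ)
    (A : Set (EuclideanSpace ℝ (Fin d)))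
    (hA : A = {y | ∀ k, ∑ i, (M k i : ℝ) * y i = (b k : ℝ)})
    (x : Fin d → ℕ) (hx : natToE x ∈ A) :
    ∃ c : ℝ, 0 < c ∧
      ∀ p : ℕ, 0 < p → ∀ y : Fin d → ℤ,
        (∀ i, y i ≡ (x i : ℤ) [ZMOD (p : ℤ)]) →
        intToE y ∉ A →
        c * p ≤ Metric.infDist (intToE y) A := by
  obtain ⟨D, hD, hDM⟩ := exists_int_ne_zero_mul_eq_intCast ℝ fun ki : Fin l × Fin d => M ki.1 ki.2
  set m : Fin l → EuclideanSpace ℝ (Fin d) := fun k => WithLp.toLp 2 fun i => (M k i : ℝ)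
  obtain rfl : A = {w | ∀ k, ⟪m k, w⟫ = b k} := by
    simp [hA, m, PiLp.inner_apply, mul_comm]
  obtain ⟨B, hB, hdist⟩ := exists_pos_abs_inner_sub_le_mul_infDist m (fun k => b k) ⟨_, hx⟩
  refine ⟨1 / (|(D : ℝ)| * B), by positivity, fun p _ y hy hyA => ?_⟩
  obtain ⟨k, hk⟩ : ∃ k, ⟪m k, intToE y⟫ ≠ b k := by simpa using hyA
  have hres : ⟪m k, intToE y⟫ - b k = ∑ i, (M k i : ℝ) * ((y i - x i : ℤ) : ℝ) := by
    rw [← hx k, ← inner_sub_right]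
    simp [m, intToE, natToE, PiLp.inner_apply, mul_comm]
  have hp : (p : ℝ) ≤ |(D : ℝ)| * |⟪m k, intToE y⟫ - b k| := by
    rw [← abs_mul, hres]
    refine natCast_le_abs_mul_sum_of_dvd (fun i => hDM (k, i)) (fun i => (hy i).symm.dvd) ?_
    rw [← hres]
    exact mul_ne_zero (by exact_mod_cast hD) (sub_ne_zero.mpr hk)
  calc 1 / (|(D : ℝ)| * B) * p
      ≤ 1 / (|(D : ℝ)| * B) * (|(D : ℝ)| * (B * infDist (intToE y) _)) := by
        gcongr
        exact hp.trans (by gcongr; exact hdist _ k)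
    _ = infDist (intToE y) _ := by field_simp
end
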